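/- arXiv:1406.1781 — 15 statements merged into one kernel-verified Lean document; each statement's English description precedes it below -/
import Mathlib

section
/- For every n ≥ k + 2, the sequence t_n^{(r)} satisfies the recursion n(n + 2k + 1) · t_n^{(r)} = (n − 1)(n + 2k) · t_{n-1}^{(r)} + 2(n + k) · t_{n-k-1}^{(r)}. -/
open Finset Filter Topology

/-- Rényi parking, discrete model: the normalized partial sums
`t n = s n / (n(n+2k+1))` satisfy
`n(n+2k+1) t n = (n-1)(n+2k) t (n-1) + 2(n+k) t (n-k-1)` for `n ≥ k+2`. -/
theorem parking_t_recursion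
    (k r : ℕ) (hk : 1 ≤ k) (hkr : k ≤ r) (hrk : r ≤ 2 * k)
    (a s t : ℕ → ℝ)
    (ha_init : ∀ n : ℕ, 1 ≤ n → n ≤ k + 1 →
      a n = if n = r - k + 1 then 1 else 0)
    (ha_rec : ∀ n : ℕ, k + 2 ≤ n →
      a n = 2 / ((n : ℝ) - k - 1) * ∑ i ∈ Finset.Icc 1 (n - k - 1), a i)
    (hs : ∀ n : ℕ, s n = ∑ i ∈ Finset.Icc 1 n, a i)
    (ht : ∀ n : ℕ, t n = s n / ((n : ℝ) * ((n : ℝ) + 2 * k + 1))) :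
    ∀ n : ℕ, k + 2 ≤ n →
      (n : ℝ) * ((n : ℝ) + 2 * k + 1) * t n =
        ((n : ℝ) - 1) * ((n : ℝ) + 2 * k) * t (n - 1) +
          2 * ((n : ℝ) + k) * t (n - k - 1) := by
  intro n hn
  have hkR : (1 : ℝ) ≤ (k : ℝ) := by exact_mod_cast hk
  have hnR : (k : ℝ) + 2 ≤ (n : ℝ) := by exact_mod_cast hn
  have hc1 : ((n - 1 : ℕ) : ℝ) = (n : ℝ) - 1 := by
    have h1 : 1 ≤ n := by omega
    push_cast [h1]; ring
  have hc2 : ((n - k - 1 : ℕ) : ℝ) = (n : ℝ) - k - 1 := by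
    have h1 : k + 1 ≤ n := by omega
    have : n - k - 1 = n - (k + 1) := by omega
    rw [this]
    push_cast [h1]; ring
  have hsa : s n = s (n - 1) + a n := by
    have hne : n ∉ Finset.Icc 1 (n - 1) := by
      simp only [Finset.mem_Icc]; omega
    have hins : Finset.Icc 1 n = insert n (Finset.Icc 1 (n - 1)) := by
      ext x
      simp only [Finset.mem_Icc, Finset.mem_insert]
      omega
    rw [hs, hs, hins, Finset.sum_insert hne]; ring
  have han : a n = 2 / ((n : ℝ) - k - 1) * s (n - k - 1) := by
    rw [ha_rec n hn, hs]
  have h0 : (n : ℝ) ≠ 0 := ne_of_gt (by nlinarith)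
  have h1 : (n : ℝ) - 1 ≠ 0 := ne_of_gt (by nlinarith)
  have h2 : (n : ℝ) - k - 1 ≠ 0 := ne_of_gt (by nlinarith)
  have h3 : (n : ℝ) + 2 * k + 1 ≠ 0 := ne_of_gt (by nlinarith)
  have h4 : (n : ℝ) + 2 * k ≠ 0 := ne_of_gt (by nlinarith)
  have h5 : (n : ℝ) + k ≠ 0 := ne_of_gt (by nlinarith)
  rw [ht n, ht (n - 1), ht (n - k - 1), hc1, hc2, hsa, han]
  have hd1 : (n : ℝ) - 1 + 2 * k + 1 = (n : ℝ) + 2 * k := by ring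
  have hd2 : (n : ℝ) - k - 1 + 2 * k + 1 = (n : ℝ) + k := by ring
  rw [hd1, hd2]
  field_simp
end

section
/- For every n ≥ k + 2, the sequence u_n^{(r)} satisfies the k-step linear recursion u_n^{(r)} = (−2(n + k)/(n(n + 2k + 1))) · Σ_{i=1}^{k} u_{n-i}^{(r)}. -/
open Finset Filter Topology

/-- Rényi parking, discrete model: the differences `u n = t n - t (n-1)` satisfy the
`k`-step linear recursion `u n = (-2(n+k)/(n(n+2k+1))) · Σ_{i=1}^{k} u (n-i)`
for `n ≥ k+2`. -/
theorem parking_u_recursion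
    (k r : ℕ) (hk : 1 ≤ k) (hkr : k ≤ r) (hrk : r ≤ 2 * k)
    (a s t u : ℕ → ℝ)
    (ha_init : ∀ n : ℕ, 1 ≤ n → n ≤ k + 1 →
      a n = if n = r - k + 1 then 1 else 0)
    (ha_rec : ∀ n : ℕ, k + 2 ≤ n →
      a n = 2 / ((n : ℝ) - k - 1) * ∑ i ∈ Finset.Icc 1 (n - k - 1), a i)
    (hs : ∀ n : ℕ, s n = ∑ i ∈ Finset.Icc 1 n, a i)
    (ht : ∀ n : ℕ, t n = s n / ((n : ℝ) * ((n : ℝ) + 2 * k + 1)))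
    (hu : ∀ n : ℕ, 2 ≤ n → u n = t n - t (n - 1)) :
    ∀ n : ℕ, k + 2 ≤ n →
      u n = -2 * ((n : ℝ) + k) / ((n : ℝ) * ((n : ℝ) + 2 * k + 1)) *
        ∑ i ∈ Finset.Icc 1 k, u (n - i) := by
  intro n hn
  have hn1 : (2:ℕ) ≤ n := by omega
  -- telescoping sum
  have hT : ∑ i ∈ Finset.Icc 1 k, u (n - i) = t (n-1) - t (n-1-k) := by
    rw [show Finset.Icc 1 k = Finset.Ico 1 (k+1) from (Finset.Ico_add_one_right_eq_Icc 1 k).symm,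
      Finset.sum_Ico_eq_sum_range]
    have hc : ∀ i ∈ Finset.range (k + 1 - 1), u (n - (1+i)) =
        t (n-1-i) - t (n-1-(i+1)) := by
      intro i hi
      simp only [Finset.mem_range] at hi
      have h2 : 2 ≤ n - (1+i) := by omega
      rw [hu _ h2]
      congr 2 <;> omega
    rw [Finset.sum_congr rfl hc]
    have := Finset.sum_range_sub' (fun j => t (n-1-j)) (k+1-1)
    rw [this]
    norm_num
  have hcast1 : ((n-1 : ℕ) : ℝ) = (n:ℝ) - 1 := by
    rw [Nat.cast_sub (by omega)]; norm_num
  have hcast2 : ((n-1-k : ℕ) : ℝ) = (n:ℝ) - 1 - (k:ℝ) := by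
    rw [show n - 1 - k = n - (1+k) from by omega, Nat.cast_sub (by omega)]
    push_cast; ring
  have hsn : s n = s (n-1) + 2/((n:ℝ)-k-1) * s (n-1-k) := by
    have h1 : s n = s (n-1) + a n := by
      have h := Finset.sum_Icc_succ_top (show 1 ≤ (n-1)+1 by omega) a
      rw [show (n-1)+1 = n from by omega] at h
      rw [hs n, hs (n-1), h]
    have h2 : a n = 2/((n:ℝ)-k-1) * s (n-1-k) := by
      rw [ha_rec n hn, hs (n-1-k), show n - k - 1 = n - 1 - k from by omega]
    rw [h1, h2]
  have hNK : (k:ℝ) + 2 ≤ (n:ℝ) := by exact_mod_cast hn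
  have hK : (1:ℝ) ≤ (k:ℝ) := by exact_mod_cast hk
  have h0 : (n:ℝ) ≠ 0 := by nlinarith
  have h1 : (n:ℝ) + 2*k + 1 ≠ 0 := by nlinarith
  have h2 : (n:ℝ) - 1 ≠ 0 := by nlinarith
  have h3 : (n:ℝ) - 1 + 2*k + 1 ≠ 0 := by nlinarith
  have h4 : (n:ℝ) - 1 - k ≠ 0 := by nlinarith
  have h5 : (n:ℝ) - 1 - k + 2*k + 1 ≠ 0 := by nlinarith
  have h6 : (n:ℝ) - k - 1 ≠ 0 := by nlinarith
  rw [hu n hn1, hT, ht n, ht (n-1), ht (n-1-k), hsn, hcast1, hcast2]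
  field_simp
  ring
end

section
/- For every n ≥ k + 2, |u_n^{(r)}| ≤ (2(n + k)/(n(n + 2k + 1))) · Σ_{i=1}^{k} |u_{n-i}^{(r)}|, and consequently |u_n^{(r)}| ≤ (2/n) · Σ_{i=1}^{k} |u_{n-i}^{(r)}|. -/
open Finset Filter Topology

/-- Rényi parking, discrete model: for `n ≥ k+2`,
`|u n| ≤ (2(n+k)/(n(n+2k+1))) Σ_{i=1}^{k} |u (n-i)|`, and consequently
`|u n| ≤ (2/n) Σ_{i=1}^{k} |u (n-i)|`. -/
theorem parking_u_abs_bound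
    (k r : ℕ) (hk : 1 ≤ k) (hkr : k ≤ r) (hrk : r ≤ 2 * k)
    (a s t u : ℕ → ℝ)
    (ha_init : ∀ n : ℕ, 1 ≤ n → n ≤ k + 1 →
      a n = if n = r - k + 1 then 1 else 0)
    (ha_rec : ∀ n : ℕ, k + 2 ≤ n →
      a n = 2 / ((n : ℝ) - k - 1) * ∑ i ∈ Finset.Icc 1 (n - k - 1), a i)
    (hs : ∀ n : ℕ, s n = ∑ i ∈ Finset.Icc 1 n, a i)
    (ht : ∀ n : ℕ, t n = s n / ((n : ℝ) * ((n : ℝ) + 2 * k + 1)))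
    (hu : ∀ n : ℕ, 2 ≤ n → u n = t n - t (n - 1)) :
    ∀ n : ℕ, k + 2 ≤ n →
      |u n| ≤ 2 * ((n : ℝ) + k) / ((n : ℝ) * ((n : ℝ) + 2 * k + 1)) *
          ∑ i ∈ Finset.Icc 1 k, |u (n - i)| ∧
      |u n| ≤ 2 / (n : ℝ) * ∑ i ∈ Finset.Icc 1 k, |u (n - i)| := by
  intro n hn
  have hK0 : (0 : ℝ) ≤ (k : ℝ) := by positivity
  have hK1 : (1 : ℝ) ≤ (k : ℝ) := by exact_mod_cast hk
  have hNK : (k : ℝ) + 2 ≤ (n : ℝ) := by exact_mod_cast hn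
  have hN3 : (3 : ℝ) ≤ (n : ℝ) := by linarith
  -- telescoping sum
  have hA : ∑ i ∈ Finset.Icc 1 k, u (n - i) = t (n - 1) - t (n - (k + 1)) := by
    have h1 : ∀ i ∈ Finset.Icc 1 k, u (n - i) =
        t (n - i) - t (n - (i + 1)) := by
      intro i hi
      obtain ⟨hi1, hik⟩ := Finset.mem_Icc.mp hi
      rw [hu (n - i) (by omega)]
      congr 2
    rw [Finset.sum_congr rfl h1, ← Finset.Ico_add_one_right_eq_Icc,
      Finset.sum_Ico_eq_sum_range]
    have h2 := Finset.sum_range_sub' (fun j => t (n - (j + 1))) k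
    simpa [Nat.add_comm 1] using h2
  -- s recursion
  have hsn : s n = s (n - 1) + a n := by
    obtain ⟨m, rfl⟩ : ∃ m, n = m + 1 := ⟨n - 1, by omega⟩
    rw [hs, hs, Finset.sum_Icc_succ_top (by omega)]
    simp
  have han : a n = 2 / ((n : ℝ) - k - 1) * s (n - (k + 1)) := by
    rw [ha_rec n hn, hs]
    congr 2
  -- casts
  have hc1 : ((n - 1 : ℕ) : ℝ) = (n : ℝ) - 1 := by
    rw [Nat.cast_sub (by omega), Nat.cast_one]
  have hc2 : ((n - (k + 1) : ℕ) : ℝ) = (n : ℝ) - ((k : ℝ) + 1) := by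
    rw [Nat.cast_sub (by omega)]
    push_cast
    ring
  -- nonzero facts
  have hNne : (n : ℝ) ≠ 0 := by linarith
  have hD1 : (n : ℝ) + 2 * k + 1 ≠ 0 := by linarith
  have hD2 : (n : ℝ) - 1 ≠ 0 := by linarith
  have hD3 : (n : ℝ) - 1 + 2 * k + 1 ≠ 0 := by linarith
  have hD4 : (n : ℝ) - ((k : ℝ) + 1) ≠ 0 := by
    intro h; linarith
  have hD5 : (n : ℝ) - ((k : ℝ) + 1) + 2 * k + 1 ≠ 0 := by
    intro h; linarith
  have hD6 : (n : ℝ) - (k : ℝ) - 1 ≠ 0 := by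
    intro h; linarith
  -- key identity
  have key : u n = -(2 * ((n : ℝ) + k) / ((n : ℝ) * ((n : ℝ) + 2 * k + 1))) *
      (t (n - 1) - t (n - (k + 1))) := by
    rw [hu n (by omega), ht n, ht (n - 1), ht (n - (k + 1)), hc1, hc2,
      hsn, han]
    field_simp
    ring
  have habs : |u n| = 2 * ((n : ℝ) + k) / ((n : ℝ) * ((n : ℝ) + 2 * k + 1)) *
      |∑ i ∈ Finset.Icc 1 k, u (n - i)| := by
    rw [hA, key, neg_mul, abs_neg, abs_mul]
    congr 1
    rw [abs_of_nonneg]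
    positivity
  have hsum_le : |∑ i ∈ Finset.Icc 1 k, u (n - i)| ≤
      ∑ i ∈ Finset.Icc 1 k, |u (n - i)| :=
    Finset.abs_sum_le_sum_abs _ _
  have hc_nonneg : (0 : ℝ) ≤ 2 * ((n : ℝ) + k) / ((n : ℝ) * ((n : ℝ) + 2 * k + 1)) := by
    positivity
  have h1 : |u n| ≤ 2 * ((n : ℝ) + k) / ((n : ℝ) * ((n : ℝ) + 2 * k + 1)) *
      ∑ i ∈ Finset.Icc 1 k, |u (n - i)| := by
    rw [habs]
    exact mul_le_mul_of_nonneg_left hsum_le hc_nonneg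
  refine ⟨h1, ?_⟩
  have hS_nonneg : (0 : ℝ) ≤ ∑ i ∈ Finset.Icc 1 k, |u (n - i)| :=
    Finset.sum_nonneg fun i _ => abs_nonneg _
  have hcle : 2 * ((n : ℝ) + k) / ((n : ℝ) * ((n : ℝ) + 2 * k + 1)) ≤ 2 / (n : ℝ) := by
    rw [div_le_div_iff₀ (by positivity) (by linarith)]
    nlinarith
  calc |u n| ≤ 2 * ((n : ℝ) + k) / ((n : ℝ) * ((n : ℝ) + 2 * k + 1)) *
      ∑ i ∈ Finset.Icc 1 k, |u (n - i)| := h1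
    _ ≤ 2 / (n : ℝ) * ∑ i ∈ Finset.Icc 1 k, |u (n - i)| :=
      mul_le_mul_of_nonneg_right hcle hS_nonneg
end

section
/- For every n ≥ 2, writing n = pk + s with integers p ≥ 0 and 2 ≤ s ≤ k + 1, one has |u_n^{(r)}| ≤ M · 2^p / p!, where M = max{ |u_i^{(r)}| : 2 ≤ i ≤ 2k } (with M = |u_2^{(r)}| when k = 1). -/
open Finset Filter Topology

/-- Rényi parking, discrete model: writing `n = p·k + q` with `p ≥ 0` and
`2 ≤ q ≤ k+1`, one has `|u n| ≤ M · 2^p / p!`, where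
`M = max{|u i| : 2 ≤ i ≤ 2k}`. -/
theorem parking_u_superexp_bound
    (k r : ℕ) (hk : 1 ≤ k) (hkr : k ≤ r) (hrk : r ≤ 2 * k)
    (a s t u : ℕ → ℝ)
    (ha_init : ∀ n : ℕ, 1 ≤ n → n ≤ k + 1 →
      a n = if n = r - k + 1 then 1 else 0)
    (ha_rec : ∀ n : ℕ, k + 2 ≤ n →
      a n = 2 / ((n : ℝ) - k - 1) * ∑ i ∈ Finset.Icc 1 (n - k - 1), a i)
    (hs : ∀ n : ℕ, s n = ∑ i ∈ Finset.Icc 1 n, a i)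
    (ht : ∀ n : ℕ, t n = s n / ((n : ℝ) * ((n : ℝ) + 2 * k + 1)))
    (hu : ∀ n : ℕ, 2 ≤ n → u n = t n - t (n - 1))
    (M : ℝ)
    (hM : IsGreatest {x : ℝ | ∃ i : ℕ, 2 ≤ i ∧ i ≤ 2 * k ∧ x = |u i|} M) :
    ∀ n p q : ℕ, 2 ≤ n → n = p * k + q → 2 ≤ q → q ≤ k + 1 →
      |u n| ≤ M * 2 ^ p / (p.factorial : ℝ) := by
  have hM0 : 0 ≤ M := le_trans (abs_nonneg (u 2)) (hM.2 ⟨2, le_refl 2, by omega, rfl⟩)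
  -- the recurrence for u
  have hrec : ∀ b : ℕ, 1 ≤ b →
      u (k + 1 + b) = 2 * (((k:ℝ) + 1 + b) + k) /
        (((k:ℝ) + 1 + b) * (((k:ℝ) + 1 + b) + 2 * k + 1)) * (t b - t (b + k)) := by
    intro b hb
    have hb0 : (0:ℝ) < b := by exact_mod_cast hb
    have hu' := hu (k + 1 + b) (by omega)
    have e1 : k + 1 + b - 1 = b + k := by omega
    rw [e1] at hu'
    have ha' := ha_rec (k + 1 + b) (by omega)
    have e2 : k + 1 + b - k - 1 = b := by omega
    rw [e2, ← hs b] at ha'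
    have hsn : s (k + 1 + b) = s (b + k) + a (k + 1 + b) := by
      rw [hs (k+1+b), hs (b+k), show k + 1 + b = (b + k) + 1 by omega,
        Finset.sum_Icc_succ_top (by omega)]
    have hcast : ((k + 1 + b : ℕ) : ℝ) = (k:ℝ) + 1 + b := by push_cast; ring
    have hcast2 : ((b + k : ℕ) : ℝ) = (b:ℝ) + k := by push_cast; ring
    rw [hu', ht (k+1+b), ht (b+k), ht b, hsn, ha', hcast, hcast2]
    have h7 : ((k:ℝ) + 1 + b) - (k:ℝ) - 1 = (b:ℝ) := by ring
    rw [h7]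
    have h1 : ((k:ℝ) + 1 + b) ≠ 0 := by positivity
    have h2 : ((k:ℝ) + 1 + b) + 2*k + 1 ≠ 0 := by positivity
    have h3 : ((b:ℝ) + k) ≠ 0 := by positivity
    have h4 : ((b:ℝ) + k) + 2*k + 1 ≠ 0 := by positivity
    have h5 : (b:ℝ) ≠ 0 := ne_of_gt hb0
    have h6 : (b:ℝ) + 2*k + 1 ≠ 0 := by positivity
    field_simp
    ring
  -- telescoping
  have htel : ∀ m b : ℕ, 1 ≤ b →
      t (b + m) - t b = ∑ i ∈ Finset.Icc (b+1) (b+m), u i := by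
    intro m
    induction m with
    | zero => intro b hb; simp
    | succ m ih =>
      intro b hb
      rw [show b + (m+1) = (b+m)+1 by omega, Finset.sum_Icc_succ_top (by omega)]
      have h := hu (b+m+1) (by omega)
      rw [show b+m+1-1 = b+m by omega] at h
      rw [← ih b hb, h]
      ring
  -- main claim by strong induction
  intro n₀
  induction n₀ using Nat.strong_induction_on with
  | _ n IH =>
  intro p q hn hnpq hq2 hqk
  obtain ⟨d, rfl⟩ : ∃ d, q = d + 2 := ⟨q - 2, by omega⟩
  obtain _ | p := p
  · -- base case p = 0
    have h := hM.2 ⟨n, hn, by omega, rfl⟩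
    simpa [Nat.factorial] using h
  · -- inductive step
    have hmul : (p+1)*k = p*k + k := by ring
    set b := p * k + d + 1 with hbdef
    have hb1 : 1 ≤ b := by omega
    obtain rfl : n = k + 1 + b := by omega
    have hbcast : (b:ℝ) = (p:ℝ)*k + d + 1 := by rw [hbdef]; push_cast; ring
    have hk1 : (1:ℝ) ≤ (k:ℝ) := by exact_mod_cast hk
    have hd0 : (0:ℝ) ≤ (d:ℝ) := Nat.cast_nonneg d
    have hp0 : (0:ℝ) ≤ (p:ℝ) := Nat.cast_nonneg p
    have hdk : (d:ℝ) ≤ (k:ℝ) - 1 := by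
      have : d + 1 ≤ k := by omega
      have := (Nat.cast_le (α := ℝ)).2 this
      push_cast at this; linarith
    have hC0 : (0:ℝ) ≤ 2 * (((k:ℝ) + 1 + b) + k) /
        (((k:ℝ) + 1 + b) * (((k:ℝ) + 1 + b) + 2 * k + 1)) := by positivity
    -- |u n| as C * |sum|
    have habs : |u (k+1+b)| = 2 * (((k:ℝ) + 1 + b) + k) /
        (((k:ℝ) + 1 + b) * (((k:ℝ) + 1 + b) + 2 * k + 1)) *
        |∑ i ∈ Finset.Icc (b+1) (b+k), u i| := by
      rw [hrec b hb1, abs_mul]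
      congr 1
      · exact abs_of_nonneg hC0
      · rw [abs_sub_comm, htel k b hb1]
    -- bound the window sum
    have hsplit : ∑ i ∈ Finset.Icc (b+1) (b+k), |u i| ≤
        ((k:ℝ) - d) * (M * 2 ^ p / (p.factorial : ℝ))
        + (d:ℝ) * (M * 2 ^ (p+1) / ((p+1).factorial : ℝ)) := by
      have e : Finset.Icc (b+1) (b+k) = Finset.Ioc b (b+k) := by
        rw [Finset.Icc_add_one_left_eq_Ioc]
      rw [e, ← Finset.sum_Ioc_consecutive (fun i => |u i|)
        (show b ≤ (p+1)*k+1 by omega) (show (p+1)*k+1 ≤ b+k by omega)]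
      have h1 : ∑ i ∈ Finset.Ioc b ((p+1)*k+1), |u i| ≤
          ((k:ℝ) - d) * (M * 2 ^ p / (p.factorial : ℝ)) := by
        have hb := Finset.sum_le_card_nsmul (Finset.Ioc b ((p+1)*k+1)) (fun i => |u i|)
          (M * 2 ^ p / (p.factorial : ℝ)) ?_
        · rw [Nat.card_Ioc, show (p+1)*k+1 - b = k - d by omega, nsmul_eq_mul,
            Nat.cast_sub (by omega)] at hb
          exact hb
        · intro i hi
          rw [Finset.mem_Ioc] at hi
          exact IH i (by omega) p (i - p*k) (by omega) (by omega) (by omega) (by omega)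
      have h2 : ∑ i ∈ Finset.Ioc ((p+1)*k+1) (b+k), |u i| ≤
          (d:ℝ) * (M * 2 ^ (p+1) / ((p+1).factorial : ℝ)) := by
        have hb := Finset.sum_le_card_nsmul (Finset.Ioc ((p+1)*k+1) (b+k)) (fun i => |u i|)
          (M * 2 ^ (p+1) / ((p+1).factorial : ℝ)) ?_
        · rw [Nat.card_Ioc, show b+k - ((p+1)*k+1) = d by omega, nsmul_eq_mul] at hb
          exact hb
        · intro i hi
          rw [Finset.mem_Ioc] at hi
          exact IH i (by omega) (p+1) (i - (p+1)*k) (by omega) (by omega) (by omega) (by omega)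
      linarith
    -- final arithmetic
    have hfp : (0:ℝ) < (p.factorial : ℝ) := by exact_mod_cast p.factorial_pos
    have hfact : ((p+1).factorial : ℝ) = ((p:ℝ)+1) * (p.factorial : ℝ) := by
      rw [Nat.factorial_succ]; push_cast; ring
    have hpoly : (((k:ℝ)+1+b)+k) * (((k:ℝ)-d)*((p:ℝ)+1) + 2*(d:ℝ)) ≤
        ((k:ℝ)+1+b) * (((k:ℝ)+1+b)+2*k+1) := by
      have hk0 : (0:ℝ) ≤ (k:ℝ) := by linarith
      rw [hbcast]
      nlinarith [mul_nonneg (mul_nonneg (mul_nonneg hp0 hp0) hd0) hk0,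
        mul_nonneg (mul_nonneg hp0 hd0) hk0,
        mul_nonneg (mul_nonneg hp0 hd0) hd0,
        mul_nonneg hp0 hd0,
        mul_nonneg (mul_nonneg hp0 hk0) hk0,
        mul_nonneg hp0 hk0,
        mul_nonneg hk0 hk0,
        mul_nonneg hd0 hk0]
    have hid : M * 2^(p+1) / ((p+1).factorial : ℝ)
        - 2 * (((k:ℝ)+1+b)+k) / (((k:ℝ)+1+b) * (((k:ℝ)+1+b)+2*k+1)) *
          ( ((k:ℝ)-d) * (M*2^p/(p.factorial:ℝ))
            + (d:ℝ) * (M * 2^(p+1)/((p+1).factorial:ℝ)) )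
        = (((k:ℝ)+1+b) * (((k:ℝ)+1+b)+2*k+1)
            - (((k:ℝ)+1+b)+k) * (((k:ℝ)-d)*((p:ℝ)+1) + 2*(d:ℝ)))
          * (2 * (M * 2^p / (p.factorial:ℝ)))
          / ((((k:ℝ)+1+b) * (((k:ℝ)+1+b)+2*k+1)) * (((p:ℝ)+1)))  := by
      rw [hfact, pow_succ]
      have h1 : ((k:ℝ) + 1 + b) ≠ 0 := by positivity
      have h2 : ((k:ℝ) + 1 + b) + 2*k + 1 ≠ 0 := by positivity
      have h3 : ((p:ℝ)+1) ≠ 0 := by positivity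
      have h4 : (p.factorial:ℝ) ≠ 0 := ne_of_gt hfp
      field_simp
    have hnn : 0 ≤ (((k:ℝ)+1+b) * (((k:ℝ)+1+b)+2*k+1)
            - (((k:ℝ)+1+b)+k) * (((k:ℝ)-d)*((p:ℝ)+1) + 2*(d:ℝ)))
          * (2 * (M * 2^p / (p.factorial:ℝ)))
          / ((((k:ℝ)+1+b) * (((k:ℝ)+1+b)+2*k+1)) * (((p:ℝ)+1))) := by
      apply div_nonneg
      · exact mul_nonneg (sub_nonneg.mpr hpoly) (by positivity)
      · positivity
    rw [habs]
    have hstep : 2 * (((k:ℝ) + 1 + b) + k) /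
        (((k:ℝ) + 1 + b) * (((k:ℝ) + 1 + b) + 2 * k + 1)) *
        |∑ i ∈ Finset.Icc (b+1) (b+k), u i| ≤
        2 * (((k:ℝ) + 1 + b) + k) /
        (((k:ℝ) + 1 + b) * (((k:ℝ) + 1 + b) + 2 * k + 1)) *
        ( ((k:ℝ)-d) * (M*2^p/(p.factorial:ℝ))
          + (d:ℝ) * (M * 2^(p+1)/((p+1).factorial:ℝ)) ) := by
      apply mul_le_mul_of_nonneg_left _ hC0
      exact le_trans (Finset.abs_sum_le_sum_abs _ _) hsplit
    linarith [hid, hnn, hstep]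
end

section
/- For every n ≥ 2, |u_n^{(r)}| ≤ w'_n, where (w'_n)_{n ≥ 2} is the auxiliary majorant sequence defined by w'_n = M for 2 ≤ n ≤ 2k and w'_n = (2/n) · Σ_{i=1}^{k} w'_{n-i} for n ≥ 2k + 1. -/
open Finset Filter Topology

/-- Rényi parking, discrete model: `|u n|` is majorized by the auxiliary sequence
`w'` defined by `w' n = M` for `2 ≤ n ≤ 2k` and
`w' n = (2/n) Σ_{i=1}^{k} w' (n-i)` for `n ≥ 2k+1`. -/
theorem parking_u_majorant
    (k r : ℕ) (hk : 1 ≤ k) (hkr : k ≤ r) (hrk : r ≤ 2 * k)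
    (a s t u : ℕ → ℝ)
    (ha_init : ∀ n : ℕ, 1 ≤ n → n ≤ k + 1 →
      a n = if n = r - k + 1 then 1 else 0)
    (ha_rec : ∀ n : ℕ, k + 2 ≤ n →
      a n = 2 / ((n : ℝ) - k - 1) * ∑ i ∈ Finset.Icc 1 (n - k - 1), a i)
    (hs : ∀ n : ℕ, s n = ∑ i ∈ Finset.Icc 1 n, a i)
    (ht : ∀ n : ℕ, t n = s n / ((n : ℝ) * ((n : ℝ) + 2 * k + 1)))
    (hu : ∀ n : ℕ, 2 ≤ n → u n = t n - t (n - 1))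
    (M : ℝ)
    (hM : IsGreatest {x : ℝ | ∃ i : ℕ, 2 ≤ i ∧ i ≤ 2 * k ∧ x = |u i|} M)
    (w : ℕ → ℝ)
    (hw_init : ∀ n : ℕ, 2 ≤ n → n ≤ 2 * k → w n = M)
    (hw_rec : ∀ n : ℕ, 2 * k + 1 ≤ n →
      w n = 2 / (n : ℝ) * ∑ i ∈ Finset.Icc 1 k, w (n - i)) :
    ∀ n : ℕ, 2 ≤ n → |u n| ≤ w n := by
  -- s m = m (m + 2k + 1) t m
  have hst : ∀ m : ℕ, 1 ≤ m → s m = (m : ℝ) * ((m : ℝ) + 2 * k + 1) * t m := by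
    intro m hm
    have hm0 : (m : ℝ) ≠ 0 := Nat.cast_ne_zero.mpr (by omega)
    have hm1 : (m : ℝ) + 2 * k + 1 ≠ 0 := by positivity
    rw [ht m]
    field_simp
  intro n
  induction n using Nat.strong_induction_on with
  | _ n ih =>
  intro hn2
  by_cases hcase : n ≤ 2 * k
  · rw [hw_init n hn2 hcase]
    exact hM.2 ⟨n, hn2, hcase, rfl⟩
  · obtain ⟨q, rfl⟩ : ∃ q, n = q + k + 1 := ⟨n - k - 1, by omega⟩
    have hqk : k ≤ q := by omega
    have hq1 : 1 ≤ q := by omega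
    have hq0 : (q : ℝ) ≠ 0 := Nat.cast_ne_zero.mpr (by omega)
    have hkR : (1 : ℝ) ≤ (k : ℝ) := by exact_mod_cast hk
    have hqR : (k : ℝ) ≤ (q : ℝ) := by exact_mod_cast hqk
    -- a (q+k+1) = 2(q+2k+1) t q
    have ha : a (q + k + 1) = 2 * ((q : ℝ) + 2 * k + 1) * t q := by
      rw [ha_rec _ (by omega)]
      have h1 : q + k + 1 - k - 1 = q := by omega
      rw [h1, ← hs, hst q hq1]
      push_cast
      have h2 : (q : ℝ) + (k : ℝ) + 1 - (k : ℝ) - 1 = (q : ℝ) := by ring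
      rw [h2]
      field_simp
    -- s splits
    have hsum : s (q + k + 1) = s (q + k) + a (q + k + 1) := by
      rw [hs (q + k + 1), hs (q + k), Finset.sum_Icc_succ_top (by omega)]
    rw [hst (q + k + 1) (by omega), hst (q + k) (by omega), ha] at hsum
    push_cast at hsum
    -- u at q+k+1
    have hu_n : u (q + k + 1) = t (q + k + 1) - t (q + k) := by
      rw [hu _ (by omega)]
      norm_num
    -- key identity
    have key : ((q : ℝ) + k + 1) * ((q : ℝ) + 3 * k + 2) * u (q + k + 1)
        = -(2 * ((q : ℝ) + 2 * k + 1) * (t (q + k) - t q)) := by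
      rw [hu_n]
      linear_combination hsum
    -- telescoping
    have htel' : ∀ j : ℕ, j ≤ k →
        ∑ i ∈ Finset.Icc 1 j, u (q + k + 1 - i) = t (q + k) - t (q + k - j) := by
      intro j
      induction j with
      | zero => simp
      | succ j ihj =>
        intro hjk
        rw [Finset.sum_Icc_succ_top (by omega), ihj (by omega)]
        have h1 : q + k + 1 - (j + 1) = q + k - j := by omega
        rw [h1, hu _ (by omega)]
        have h2 : q + k - j - 1 = q + k - (j + 1) := by omega
        rw [h2]
        ring
    have htel : ∑ i ∈ Finset.Icc 1 k, u (q + k + 1 - i) = t (q + k) - t q := by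
      have := htel' k le_rfl
      rwa [Nat.add_sub_cancel] at this
    set S := ∑ i ∈ Finset.Icc 1 k, u (q + k + 1 - i) with hSdef
    set W := ∑ i ∈ Finset.Icc 1 k, w (q + k + 1 - i) with hWdef
    have hD : (0 : ℝ) < ((q : ℝ) + k + 1) * ((q : ℝ) + 3 * k + 2) := by positivity
    rw [← htel] at key
    have hu_eq : u (q + k + 1)
        = -(2 * ((q : ℝ) + 2 * k + 1) * S) / (((q : ℝ) + k + 1) * ((q : ℝ) + 3 * k + 2)) := by
      rw [eq_div_iff hD.ne']
      linear_combination key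
    have hSabs : |S| ≤ W := by
      refine (Finset.abs_sum_le_sum_abs _ _).trans (Finset.sum_le_sum ?_)
      intro i hi
      rw [Finset.mem_Icc] at hi
      exact ih (q + k + 1 - i) (by omega) (by omega)
    have hW0 : 0 ≤ W := le_trans (abs_nonneg S) hSabs
    have habs : |u (q + k + 1)|
        = 2 * ((q : ℝ) + 2 * k + 1) * |S| / (((q : ℝ) + k + 1) * ((q : ℝ) + 3 * k + 2)) := by
      rw [hu_eq, abs_div, abs_of_pos hD, abs_neg, abs_mul]
      have : |2 * ((q : ℝ) + 2 * k + 1)| = 2 * ((q : ℝ) + 2 * k + 1) := by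
        exact abs_of_pos (by positivity)
      rw [this]
    rw [habs, hw_rec _ (by omega), ← hWdef]
    rw [div_le_iff₀ hD]
    push_cast
    have hch : 2 / ((q : ℝ) + k + 1) * W * (((q : ℝ) + k + 1) * ((q : ℝ) + 3 * k + 2))
        = 2 * ((q : ℝ) + 3 * k + 2) * W := by
      field_simp
    rw [hch]
    nlinarith [hSabs, abs_nonneg S, mul_le_mul_of_nonneg_left hSabs (by positivity : (0:ℝ) ≤ 2 * ((q : ℝ) + 2 * k + 1))]
end

section
/- The auxiliary majorant sequence (w'_n)_{n ≥ 2}, defined by w'_n = M for 2 ≤ n ≤ 2k and w'_n = (2/n) · Σ_{i=1}^{k} w'_{n-i} for n ≥ 2k + 1, satisfies w'_n ≤ (2k/n) · w'_{n-k} for every n ≥ k + 2. -/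
open Finset Filter Topology

/-- Rényi parking, discrete model: the auxiliary majorant sequence `w'` satisfies
`w' n ≤ (2k/n) · w' (n-k)` for every `n ≥ k+2`. -/
theorem parking_majorant_k_step
    (k r : ℕ) (hk : 1 ≤ k) (hkr : k ≤ r) (hrk : r ≤ 2 * k)
    (a s t u : ℕ → ℝ)
    (ha_init : ∀ n : ℕ, 1 ≤ n → n ≤ k + 1 →
      a n = if n = r - k + 1 then 1 else 0)
    (ha_rec : ∀ n : ℕ, k + 2 ≤ n →
      a n = 2 / ((n : ℝ) - k - 1) * ∑ i ∈ Finset.Icc 1 (n - k - 1), a i)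
    (hs : ∀ n : ℕ, s n = ∑ i ∈ Finset.Icc 1 n, a i)
    (ht : ∀ n : ℕ, t n = s n / ((n : ℝ) * ((n : ℝ) + 2 * k + 1)))
    (hu : ∀ n : ℕ, 2 ≤ n → u n = t n - t (n - 1))
    (M : ℝ)
    (hM : IsGreatest {x : ℝ | ∃ i : ℕ, 2 ≤ i ∧ i ≤ 2 * k ∧ x = |u i|} M)
    (w : ℕ → ℝ)
    (hw_init : ∀ n : ℕ, 2 ≤ n → n ≤ 2 * k → w n = M)
    (hw_rec : ∀ n : ℕ, 2 * k + 1 ≤ n →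
      w n = 2 / (n : ℝ) * ∑ i ∈ Finset.Icc 1 k, w (n - i)) :
    ∀ n : ℕ, k + 2 ≤ n → w n ≤ 2 * (k : ℝ) / (n : ℝ) * w (n - k) := by
  obtain ⟨⟨i0, hi02, hi0k, hMval⟩, -⟩ := hM
  have hM0 : 0 ≤ M := hMval ▸ abs_nonneg _
  -- nonnegativity
  have hpos : ∀ n : ℕ, 2 ≤ n → 0 ≤ w n := by
    intro n
    induction n using Nat.strong_induction_on with
    | _ n ih =>
      intro hn2
      by_cases hcase : n ≤ 2 * k
      · rw [hw_init n hn2 hcase]; exact hM0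
      · push_neg at hcase
        rw [hw_rec n hcase]
        apply mul_nonneg (by positivity)
        apply Finset.sum_nonneg
        intro i hi
        simp only [Finset.mem_Icc] at hi
        exact ih (n - i) (by omega) (by omega)
  -- monotonicity
  have hmono : ∀ n : ℕ, 2 ≤ n → ∀ m : ℕ, 2 ≤ m → m ≤ n → w n ≤ w m := by
    intro n
    induction n using Nat.strong_induction_on with
    | _ n ih =>
      intro hn2 m hm2 hmn
      by_cases hcase : n ≤ 2 * k
      · rw [hw_init n hn2 hcase, hw_init m hm2 (le_trans hmn hcase)]
      · push_neg at hcase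
        have hn2k : 2 * k + 1 ≤ n := hcase
        have hstep : w n ≤ w (n - 1) := by
          by_cases hn' : n = 2 * k + 1
          · subst hn'
            have hsum : ∑ i ∈ Finset.Icc 1 k, w (2 * k + 1 - i) = (k : ℝ) * M := by
              have hc : ∀ i ∈ Finset.Icc 1 k, w (2 * k + 1 - i) = M := by
                intro i hi
                simp only [Finset.mem_Icc] at hi
                exact hw_init _ (by omega) (by omega)
              rw [Finset.sum_congr rfl hc, Finset.sum_const, Nat.card_Icc]
              simp [nsmul_eq_mul]
            have h1 : 2 * k + 1 - 1 = 2 * k := by omega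
            rw [hw_rec _ (by omega), hsum, h1, hw_init (2 * k) (by omega) (by omega)]
            have hc : (0:ℝ) < ((2 * k + 1 : ℕ) : ℝ) := by positivity
            rw [div_mul_eq_mul_div, div_le_iff₀ hc]
            push_cast
            nlinarith [hM0]
          · have hn2k2 : 2 * k + 2 ≤ n := by omega
            obtain ⟨k', rfl⟩ : ∃ k', k = k' + 1 := ⟨k - 1, by omega⟩
            have expand : ∀ N : ℕ, 2 * (k' + 1) + 1 ≤ N →
                ∑ i ∈ Finset.Icc 1 (k' + 1), w (N - i)
                  = ∑ i ∈ Finset.range (k' + 1), w (N - 1 - i) := by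
              intro N hN
              rw [← Finset.Ico_add_one_right_eq_Icc, Finset.sum_Ico_eq_sum_range]
              apply Finset.sum_congr
              · congr 1
              · intro i _; congr 1; omega
            have e1 : ∑ i ∈ Finset.Icc 1 (k' + 1), w (n - i)
                = (∑ i ∈ Finset.range k', w (n - 2 - i)) + w (n - 1) := by
              rw [expand n hn2k, Finset.sum_range_succ']
              have hc1 : ∀ i ∈ Finset.range k', w (n - 1 - (i + 1)) = w (n - 2 - i) :=
                fun i _ => by congr 1; omega
              rw [Finset.sum_congr rfl hc1]
              norm_num
            have e2 : ∑ i ∈ Finset.Icc 1 (k' + 1), w (n - 1 - i)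
                = (∑ i ∈ Finset.range k', w (n - 2 - i)) + w (n - 2 - k') := by
              rw [expand (n - 1) (by omega), Finset.sum_range_succ]
              have hc1 : ∀ i ∈ Finset.range k', w (n - 1 - 1 - i) = w (n - 2 - i) :=
                fun i _ => by rw [show n - 1 - 1 - i = n - 2 - i from by omega]
              have hc2 : n - 1 - 1 - k' = n - 2 - k' := by omega
              rw [Finset.sum_congr rfl hc1, hc2]
            have hT : 0 ≤ ∑ i ∈ Finset.range k', w (n - 2 - i) := by
              apply Finset.sum_nonneg
              intro i hi
              simp only [Finset.mem_range] at hi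
              exact hpos _ (by omega)
            have hle : w (n - 1) ≤ w (n - 2 - k') :=
              ih (n - 1) (by omega) (by omega) (n - 2 - k') (by omega) (by omega)
            rw [hw_rec n hn2k, hw_rec (n - 1) (by omega), e1, e2]
            have hcast : ((n - 1 : ℕ) : ℝ) = (n : ℝ) - 1 := by
              push_cast [Nat.cast_sub (by omega : 1 ≤ n)]; ring
            have hn1 : (0:ℝ) < ((n - 1 : ℕ) : ℝ) := by
              rw [hcast]
              have : (2:ℝ) ≤ (n : ℝ) := by exact_mod_cast (by omega : 2 ≤ n)
              linarith
            have hnn : ((n - 1 : ℕ) : ℝ) ≤ (n : ℝ) := by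
              rw [hcast]; linarith [hn1]
            apply mul_le_mul
            · apply div_le_div_of_nonneg_left (by norm_num) hn1 hnn
            · linarith
            · have := hpos (n - 1) (by omega); linarith
            · positivity
        rcases eq_or_lt_of_le hmn with h | h
        · exact le_of_eq (by rw [h])
        · exact le_trans hstep (ih (n - 1) (by omega) (by omega) m hm2 (by omega))
  -- main statement
  intro n hn
  by_cases hcase : n ≤ 2 * k
  · rw [hw_init n (by omega) hcase, hw_init (n - k) (by omega) (by omega)]
    have hn0 : (0:ℝ) < (n : ℝ) := by exact_mod_cast (by omega : 0 < n)
    have h1 : (1:ℝ) ≤ 2 * (k : ℝ) / (n : ℝ) := by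
      rw [le_div_iff₀ hn0]
      have : (n : ℝ) ≤ 2 * (k : ℝ) := by exact_mod_cast hcase
      linarith
    nlinarith [hM0]
  · push_neg at hcase
    rw [hw_rec n hcase]
    have hb : ∀ i ∈ Finset.Icc 1 k, w (n - i) ≤ w (n - k) := by
      intro i hi
      simp only [Finset.mem_Icc] at hi
      exact hmono (n - i) (by omega) (n - k) (by omega) (by omega)
    calc 2 / (n : ℝ) * ∑ i ∈ Finset.Icc 1 k, w (n - i)
        ≤ 2 / (n : ℝ) * ∑ _i ∈ Finset.Icc 1 k, w (n - k) :=
          mul_le_mul_of_nonneg_left (Finset.sum_le_sum hb) (by positivity)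
      _ = 2 * (k : ℝ) / (n : ℝ) * w (n - k) := by
          rw [Finset.sum_const, Nat.card_Icc]
          simp only [Nat.add_sub_cancel, nsmul_eq_mul]
          ring
end

section
/- For every n ≥ 2, writing n = pk + s with integers p ≥ 0 and 2 ≤ s ≤ k + 1, the auxiliary majorant sequence satisfies w'_n ≤ M(2k)^p / (n(n − k)(n − 2k)···(n − pk + k)) ≤ M · 2^p / p!, where (w'_n)_{n ≥ 2} is defined by w'_n = M for 2 ≤ n ≤ 2k and w'_n = (2/n) · Σ_{i=1}^{k} w'_{n-i} for n ≥ 2k + 1. -/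
open Finset Filter Topology

/-- Rényi parking, discrete model: writing `n = p·k + q` with `p ≥ 0` and
`2 ≤ q ≤ k+1`, the majorant sequence satisfies
`w' n ≤ M(2k)^p / (n(n-k)(n-2k)⋯(n-pk+k)) ≤ M·2^p/p!`. -/
theorem parking_majorant_product_bound
    (k r : ℕ) (hk : 1 ≤ k) (hkr : k ≤ r) (hrk : r ≤ 2 * k)
    (a s t u : ℕ → ℝ)
    (ha_init : ∀ n : ℕ, 1 ≤ n → n ≤ k + 1 →
      a n = if n = r - k + 1 then 1 else 0)
    (ha_rec : ∀ n : ℕ, k + 2 ≤ n →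
      a n = 2 / ((n : ℝ) - k - 1) * ∑ i ∈ Finset.Icc 1 (n - k - 1), a i)
    (hs : ∀ n : ℕ, s n = ∑ i ∈ Finset.Icc 1 n, a i)
    (ht : ∀ n : ℕ, t n = s n / ((n : ℝ) * ((n : ℝ) + 2 * k + 1)))
    (hu : ∀ n : ℕ, 2 ≤ n → u n = t n - t (n - 1))
    (M : ℝ)
    (hM : IsGreatest {x : ℝ | ∃ i : ℕ, 2 ≤ i ∧ i ≤ 2 * k ∧ x = |u i|} M)
    (w : ℕ → ℝ)
    (hw_init : ∀ n : ℕ, 2 ≤ n → n ≤ 2 * k → w n = M)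
    (hw_rec : ∀ n : ℕ, 2 * k + 1 ≤ n →
      w n = 2 / (n : ℝ) * ∑ i ∈ Finset.Icc 1 k, w (n - i)) :
    ∀ n p q : ℕ, 2 ≤ n → n = p * k + q → 2 ≤ q → q ≤ k + 1 →
      w n ≤ M * (2 * (k : ℝ)) ^ p / ∏ j ∈ Finset.range p, ((n : ℝ) - j * k) ∧
      M * (2 * (k : ℝ)) ^ p / ∏ j ∈ Finset.range p, ((n : ℝ) - j * k) ≤
        M * 2 ^ p / (p.factorial : ℝ) := by
  obtain ⟨⟨i0, hi02, hi02k, hMeq⟩, -⟩ := hM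
  have hM0 : 0 ≤ M := hMeq ▸ abs_nonneg _
  have hk0 : (0:ℝ) < k := by exact_mod_cast hk
  -- w is nonnegative
  have hw_nonneg : ∀ n, 2 ≤ n → 0 ≤ w n := by
    intro n
    induction n using Nat.strong_induction_on with
    | _ n ih =>
      intro hn2
      by_cases h : n ≤ 2*k
      · rw [hw_init n hn2 h]; exact hM0
      · push_neg at h
        rw [hw_rec n h]
        apply mul_nonneg (by positivity)
        apply Finset.sum_nonneg
        intro i hi
        simp only [Finset.mem_Icc] at hi
        exact ih (n - i) (by omega) (by omega)
  -- w is antitone (one step)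
  have hw_step : ∀ n, 2 ≤ n → w (n+1) ≤ w n := by
    intro n
    induction n using Nat.strong_induction_on with
    | _ n ih =>
      intro hn2
      by_cases h : n + 1 ≤ 2*k
      · rw [hw_init (n+1) (by omega) h, hw_init n hn2 (by omega)]
      · push_neg at h
        have hrec := hw_rec (n+1) (by omega)
        by_cases h2 : n = 2*k
        · have hsum : ∑ i ∈ Finset.Icc 1 k, w (n+1-i) = (k:ℝ) * M := by
            have hc : ∀ i ∈ Finset.Icc 1 k, w (n+1-i) = M := by
              intro i hi
              simp only [Finset.mem_Icc] at hi
              exact hw_init _ (by omega) (by omega)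
            rw [Finset.sum_congr rfl hc, Finset.sum_const, Nat.card_Icc,
              nsmul_eq_mul]
            norm_num
          rw [hrec, hsum, hw_init n hn2 (by omega)]
          have hn1 : (0:ℝ) < (n:ℝ) + 1 := by positivity
          rw [div_mul_eq_mul_div, div_le_iff₀ (by push_cast; positivity)]
          have : ((n:ℝ)) = 2*k := by exact_mod_cast h2
          push_cast
          nlinarith [hM0, hk0]
        · have hn' : 2*k+1 ≤ n := by omega
          have hterm : ∑ i ∈ Finset.Icc 1 k, w (n+1-i) ≤
              ∑ i ∈ Finset.Icc 1 k, w (n-i) := by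
            apply Finset.sum_le_sum
            intro i hi
            simp only [Finset.mem_Icc] at hi
            have he : n+1-i = (n-i)+1 := by omega
            rw [he]
            exact ih (n-i) (by omega) (by omega)
          have hS0 : 0 ≤ ∑ i ∈ Finset.Icc 1 k, w (n-i) := by
            apply Finset.sum_nonneg
            intro i hi
            simp only [Finset.mem_Icc] at hi
            exact hw_nonneg _ (by omega)
          rw [hrec, hw_rec n hn']
          have hnpos : (0:ℝ) < n := by
            have : (2*k+1 : ℝ) ≤ n := by exact_mod_cast hn'
            linarith
          calc 2/((n+1:ℕ):ℝ) * ∑ i ∈ Finset.Icc 1 k, w (n+1-i)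
              ≤ 2/((n+1:ℕ):ℝ) * ∑ i ∈ Finset.Icc 1 k, w (n-i) := by
                apply mul_le_mul_of_nonneg_left hterm
                positivity
            _ ≤ 2/(n:ℝ) * ∑ i ∈ Finset.Icc 1 k, w (n-i) := by
                apply mul_le_mul_of_nonneg_right _ hS0
                apply div_le_div_of_nonneg_left (by norm_num) hnpos
                push_cast; linarith
  -- w is antitone
  have hw_mono : ∀ m n, 2 ≤ m → m ≤ n → w n ≤ w m := by
    intro m n hm hmn
    induction n, hmn using Nat.le_induction with
    | base => exact le_rfl
    | succ n hn ihn => exact (hw_step n (le_trans hm hn)).trans ihn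
  -- main first bound
  have main : ∀ p q n : ℕ, n = p*k + q → 2 ≤ q → q ≤ k+1 →
      w n ≤ M * (2 * (k:ℝ)) ^ p / ∏ j ∈ Finset.range p, ((n : ℝ) - j * k) := by
    intro p
    induction p with
    | zero =>
      intro q n hn hq2 hqk
      simp only [pow_zero, Finset.range_zero, Finset.prod_empty, mul_one, div_one]
      rw [hw_init n (by omega) (by omega)]
    | succ p ihp =>
      intro q n hn hq2 hqk
      have hnk : n - k = p*k + q := by
        have he : (p+1)*k = p*k + k := by ring
        omega
      have hkn : k ≤ n := by omega
      have hprod_pos : ∀ j ∈ Finset.range (p+1), (0:ℝ) < (n:ℝ) - j*k := by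
        intro j hj
        simp only [Finset.mem_range] at hj
        have h1 : j * k ≤ p * k := Nat.mul_le_mul_right k (by omega)
        have h2 : j*k + k + 2 ≤ n := by omega
        have h3 : ((j*k + k + 2 : ℕ) : ℝ) ≤ (n:ℝ) := by exact_mod_cast h2
        push_cast at h3
        linarith
      by_cases h : n ≤ 2*k
      · have hp0 : p = 0 := by
          by_contra hp
          have : 2*k ≤ (p+1)*k := Nat.mul_le_mul_right k (by omega)
          omega
        subst hp0
        rw [hw_init n (by omega) h]
        rw [pow_one, Finset.prod_range_one]
        have hn0 : (0:ℝ) < n := by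
          have : ((2:ℕ):ℝ) ≤ n := by exact_mod_cast (by omega : 2 ≤ n)
          push_cast at this; linarith
        have hn2k : (n:ℝ) ≤ 2*k := by exact_mod_cast h
        rw [le_div_iff₀ (by push_cast; linarith)]
        push_cast
        nlinarith
      · push_neg at h
        rw [hw_rec n h]
        have h2nk : 2 ≤ n - k := by omega
        have hkn2 : k + 2 ≤ n := by omega
        have hsum : ∑ i ∈ Finset.Icc 1 k, w (n-i) ≤ (k:ℝ) * w (n-k) := by
          calc ∑ i ∈ Finset.Icc 1 k, w (n-i)
              ≤ ∑ _i ∈ Finset.Icc 1 k, w (n-k) := by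
                apply Finset.sum_le_sum
                intro i hi
                simp only [Finset.mem_Icc] at hi
                exact hw_mono (n-k) (n-i) h2nk (by omega)
            _ = (k:ℝ) * w (n-k) := by
                rw [Finset.sum_const, Nat.card_Icc]
                simp [nsmul_eq_mul]
        have hIH := ihp q (n-k) hnk hq2 hqk
        have hnpos : (0:ℝ) < n := by
          have : ((2*k+1:ℕ):ℝ) ≤ n := by exact_mod_cast h
          push_cast at this; linarith
        have hcast : ((n-k : ℕ):ℝ) = (n:ℝ) - k := by
          push_cast [Nat.cast_sub hkn]; ring
        have hprod' : ∀ j ∈ Finset.range p, ((n-k:ℕ):ℝ) - j*k = (n:ℝ) - (j+1)*k := by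
          intro j hj
          rw [hcast]; push_cast; ring
        have hprod'_pos : (0:ℝ) < ∏ j ∈ Finset.range p, (((n-k:ℕ):ℝ) - j*k) := by
          apply Finset.prod_pos
          intro j hj
          rw [hprod' j hj]
          have : (j+1) ∈ Finset.range (p+1) := by
            simp only [Finset.mem_range] at hj ⊢; omega
          have := hprod_pos (j+1) this
          push_cast at this ⊢
          linarith
        have hprodeq : ∏ j ∈ Finset.range (p+1), ((n:ℝ) - j*k)
            = (n:ℝ) * ∏ j ∈ Finset.range p, (((n-k:ℕ):ℝ) - j*k) := by
          rw [Finset.prod_range_succ']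
          have hc : ∀ j ∈ Finset.range p,
              ((n:ℝ) - ((j+1:ℕ):ℝ) * k) = ((n-k:ℕ):ℝ) - j*k := by
            intro j hj
            rw [hcast]; push_cast; ring
          rw [Finset.prod_congr rfl hc]
          push_cast
          ring
        have hw0 : 0 ≤ 2/(n:ℝ) := by positivity
        calc 2/(n:ℝ) * ∑ i ∈ Finset.Icc 1 k, w (n-i)
            ≤ 2/(n:ℝ) * ((k:ℝ) * w (n-k)) := mul_le_mul_of_nonneg_left hsum hw0
          _ ≤ 2/(n:ℝ) * ((k:ℝ) * (M * (2*(k:ℝ))^p /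
                ∏ j ∈ Finset.range p, (((n-k:ℕ):ℝ) - j*k))) := by
              apply mul_le_mul_of_nonneg_left _ hw0
              exact mul_le_mul_of_nonneg_left hIH (le_of_lt hk0)
          _ = M * (2*(k:ℝ))^(p+1) / ∏ j ∈ Finset.range (p+1), ((n:ℝ) - j*k) := by
              rw [hprodeq]
              field_simp
              ring
  -- second bound
  have second : ∀ p q n : ℕ, n = p*k + q → 2 ≤ q → q ≤ k+1 →
      M * (2 * (k:ℝ)) ^ p / ∏ j ∈ Finset.range p, ((n : ℝ) - j * k) ≤
        M * 2 ^ p / (p.factorial : ℝ) := by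
    intro p q n hn hq2 hqk
    have hfact : ∀ m : ℕ, ∏ j ∈ Finset.range m, ((m:ℝ) - j) = (m.factorial : ℝ) := by
      intro m
      induction m with
      | zero => simp
      | succ m ihm =>
        rw [Finset.prod_range_succ']
        have hc : ∀ j ∈ Finset.range m,
            (((m+1:ℕ):ℝ) - ((j+1:ℕ):ℝ)) = ((m:ℝ) - j) := by
          intro j hj; push_cast; ring
        rw [Finset.prod_congr rfl hc, ihm, Nat.factorial_succ]
        push_cast
        ring
    have hlow_pos : ∀ j ∈ Finset.range p, (0:ℝ) < ((p:ℝ) - j) * k := by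
      intro j hj
      simp only [Finset.mem_range] at hj
      have : (j:ℝ) + 1 ≤ p := by exact_mod_cast hj
      have : (0:ℝ) < (p:ℝ) - j := by linarith
      positivity
    have hle : ∀ j ∈ Finset.range p, ((p:ℝ) - j) * k ≤ (n:ℝ) - j*k := by
      intro j hj
      have hncast : (n:ℝ) = (p:ℝ)*k + q := by exact_mod_cast congrArg (Nat.cast : ℕ → ℝ) hn
      have hq0 : (0:ℝ) ≤ q := by positivity
      rw [hncast]
      ring_nf
      nlinarith [hq0]
    have hprod_le : ∏ j ∈ Finset.range p, (((p:ℝ) - j) * k) ≤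
        ∏ j ∈ Finset.range p, ((n:ℝ) - j*k) := by
      apply Finset.prod_le_prod (fun j hj => le_of_lt (hlow_pos j hj)) hle
    have hlowprod : ∏ j ∈ Finset.range p, (((p:ℝ) - j) * k) = (p.factorial : ℝ) * k^p := by
      rw [Finset.prod_mul_distrib, Finset.prod_const, hfact p]
      congr 1
      simp
    have hlowprod_pos : (0:ℝ) < ∏ j ∈ Finset.range p, (((p:ℝ) - j) * k) :=
      Finset.prod_pos hlow_pos
    have h1 : M * (2 * (k:ℝ)) ^ p / ∏ j ∈ Finset.range p, ((n : ℝ) - j * k) ≤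
        M * (2 * (k:ℝ)) ^ p / ((p.factorial : ℝ) * k^p) := by
      rw [← hlowprod]
      apply div_le_div_of_nonneg_left _ hlowprod_pos hprod_le
      positivity
    refine h1.trans_eq ?_
    have hfac0 : (0:ℝ) < (p.factorial : ℝ) := by exact_mod_cast p.factorial_pos
    rw [mul_pow]
    field_simp
  intro n p q hn2 hnpq hq2 hqk
  exact ⟨main p q n hnpq hq2 hqk, second p q n hnpq hq2 hqk⟩
end

section
/- The series Σ_{i=2}^{∞} u_i^{(r)} converges absolutely, and consequently the sequence t_n^{(r)} converges as n → ∞, with limit t_∞^{(r)} = s_1^{(r)}/(2k + 2) + Σ_{i=2}^{∞} u_i^{(r)}. -/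
open Finset Filter Topology

private lemma parking_tele_aux (t u : ℕ → ℝ)
    (hu : ∀ n : ℕ, 2 ≤ n → u n = t n - t (n - 1))
    (a : ℕ) (ha : 1 ≤ a) :
    ∀ b, a ≤ b → ∑ j ∈ Finset.Icc (a + 1) b, u j = t b - t a := by
  intro b hb
  induction b, hb using Nat.le_induction with
  | base => simp [Finset.Icc_eq_empty_of_lt (Nat.lt_succ_self a)]
  | succ b hb ih =>
      rw [Finset.sum_Icc_succ_top (by omega), ih, hu (b + 1) (by omega)]
      simp only [Nat.add_sub_cancel]
      ring

/-- Rényi parking, discrete model: the series `Σ_{i=2}^{∞} u i` converges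
absolutely, and the sequence `t n` converges as `n → ∞` with limit
`t_∞ = s 1/(2k+2) + Σ_{i=2}^{∞} u i`. -/
theorem parking_t_converges
    (k r : ℕ) (hk : 1 ≤ k) (hkr : k ≤ r) (hrk : r ≤ 2 * k)
    (a s t u : ℕ → ℝ)
    (ha_init : ∀ n : ℕ, 1 ≤ n → n ≤ k + 1 →
      a n = if n = r - k + 1 then 1 else 0)
    (ha_rec : ∀ n : ℕ, k + 2 ≤ n →
      a n = 2 / ((n : ℝ) - k - 1) * ∑ i ∈ Finset.Icc 1 (n - k - 1), a i)
    (hs : ∀ n : ℕ, s n = ∑ i ∈ Finset.Icc 1 n, a i)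
    (ht : ∀ n : ℕ, t n = s n / ((n : ℝ) * ((n : ℝ) + 2 * k + 1)))
    (hu : ∀ n : ℕ, 2 ≤ n → u n = t n - t (n - 1)) :
    Summable (fun i : ℕ => |u (i + 2)|) ∧
    Filter.Tendsto t Filter.atTop
      (𝓝 (s 1 / (2 * (k : ℝ) + 2) + ∑' i : ℕ, u (i + 2))) := by
  have hk1 : (1 : ℝ) ≤ (k : ℝ) := by exact_mod_cast hk
  -- the key recursion for u
  have key : ∀ n : ℕ, k + 2 ≤ n →
      u n = -(2 * ((n : ℝ) + k) / ((n : ℝ) * ((n : ℝ) + 2 * k + 1))) *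
        ∑ j ∈ Finset.Icc (n - k) (n - 1), u j := by
    intro n hn
    have hxge : (k : ℝ) + 2 ≤ (n : ℝ) := by exact_mod_cast hn
    have hx0 : (0 : ℝ) < (n : ℝ) := by linarith
    have hxd : (0 : ℝ) < (n : ℝ) + 2 * k + 1 := by linarith
    have e1 : ((n - 1 : ℕ) : ℝ) = (n : ℝ) - 1 := by
      have h : 1 ≤ n := by omega
      rw [Nat.cast_sub h, Nat.cast_one]
    have e2 : ((n - k - 1 : ℕ) : ℝ) = (n : ℝ) - k - 1 := by
      have h2 : k + 1 ≤ n := by omega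
      have h3 : n - k - 1 = n - (k + 1) := by omega
      rw [h3, Nat.cast_sub h2, Nat.cast_add, Nat.cast_one]
      ring
    -- s (n-1) in terms of t (n-1)
    have hsn1 : s (n - 1) = t (n - 1) * (((n : ℝ) - 1) * ((n : ℝ) + 2 * k)) := by
      have h := ht (n - 1)
      rw [e1] at h
      have hX : ((n : ℝ) - 1) * ((n : ℝ) + 2 * k) ≠ 0 :=
        ne_of_gt (mul_pos (by linarith) (by linarith))
      rw [h, show ((n : ℝ) - 1) * ((n : ℝ) - 1 + 2 * k + 1)
          = ((n : ℝ) - 1) * ((n : ℝ) + 2 * k) from by ring, div_mul_cancel₀ _ hX]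
    -- a n in terms of t (n-k-1)
    have han : a n = 2 * ((n : ℝ) + k) * t (n - k - 1) := by
      have hrec := ha_rec n hn
      rw [← hs (n - k - 1)] at hrec
      have hts := ht (n - k - 1)
      rw [e2] at hts
      have hne : (n : ℝ) - k - 1 ≠ 0 := by
        have : (0:ℝ) < (n : ℝ) - k - 1 := by linarith
        linarith
      have hY : ((n : ℝ) - k - 1) * ((n : ℝ) + k) ≠ 0 :=
        ne_of_gt (mul_pos (by linarith) (by linarith))
      have hS : s (n - k - 1) = t (n - k - 1) * (((n : ℝ) - k - 1) * ((n : ℝ) + k)) := by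
        rw [hts, show ((n : ℝ) - k - 1) * ((n : ℝ) - k - 1 + 2 * k + 1)
          = ((n : ℝ) - k - 1) * ((n : ℝ) + k) from by ring, div_mul_cancel₀ _ hY]
      rw [hrec, hS]
      field_simp
    -- s n = s (n-1) + a n
    have hsplit : Finset.Icc 1 n = insert n (Finset.Icc 1 (n - 1)) := by
      ext x
      simp only [Finset.mem_Icc, Finset.mem_insert]
      omega
    have hsn : s n = s (n - 1) + a n := by
      rw [hs n, hs (n - 1), hsplit,
        Finset.sum_insert (by simp only [Finset.mem_Icc]; omega)]
      ring
    -- the telescoping sum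
    have hsum_eq : ∑ j ∈ Finset.Icc (n - k) (n - 1), u j
        = t (n - 1) - t (n - k - 1) := by
      have h := parking_tele_aux t u hu (n - k - 1) (by omega) (n - 1) (by omega)
      rwa [show n - k - 1 + 1 = n - k from by omega] at h
    rw [hsum_eq, hu n (by omega), ht n, hsn, hsn1, han]
    field_simp [hx0.ne', hxd.ne']
    ring
  -- geometric ratio
  set q : ℝ := (k : ℝ) / ((k : ℝ) + 1) with hqdef
  have hq0 : 0 < q := by positivity
  have hq1 : q < 1 := by
    rw [hqdef, div_lt_one (by linarith)]; linarith
  -- q^k ≥ 1/3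
  have h3q : (1 / 3 : ℝ) ≤ q ^ k := by
    have hkR : (0 : ℝ) < (k : ℝ) := by linarith
    have h2 : (1 : ℝ) + 1 / k ≤ Real.exp (1 / k) := by
      have := Real.add_one_le_exp (1 / (k : ℝ)); linarith
    have h3 : ((1 : ℝ) + 1 / k) ^ k ≤ Real.exp (1 / k) ^ k :=
      pow_le_pow_left₀ (by positivity) h2 k
    have h4 : Real.exp (1 / (k : ℝ)) ^ k = Real.exp 1 := by
      rw [← Real.exp_nat_mul]
      congr 1
      field_simp
    have h5 : Real.exp 1 ≤ 3 := le_of_lt (lt_trans Real.exp_one_lt_d9 (by norm_num))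
    have hP3 : (((k : ℝ) + 1) / k) ^ k ≤ 3 := by
      have he : ((k : ℝ) + 1) / k = 1 + 1 / k := by field_simp
      rw [he]
      calc ((1 : ℝ) + 1 / k) ^ k ≤ Real.exp (1 / k) ^ k := h3
        _ = Real.exp 1 := h4
        _ ≤ 3 := h5
    have hP0 : (0 : ℝ) < (((k : ℝ) + 1) / k) ^ k := by positivity
    have hmul : q ^ k * (((k : ℝ) + 1) / k) ^ k = 1 := by
      rw [← mul_pow]
      have : q * (((k : ℝ) + 1) / k) = 1 := by
        rw [hqdef]; field_simp
      rw [this, one_pow]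
    have hqP : q ^ k = 1 / (((k : ℝ) + 1) / k) ^ k := by
      field_simp at hmul ⊢
      linarith [hmul]
    rw [hqP]
    exact one_div_le_one_div_of_le hP0 hP3
  -- the constant M
  set M : ℝ := ∑ j ∈ Finset.Icc 2 (7 * k + 1), |u j| * q⁻¹ ^ j with hMdef
  have hM0 : 0 ≤ M := Finset.sum_nonneg (fun j _ => by positivity)
  -- the uniform geometric bound
  have hM : ∀ n : ℕ, 2 ≤ n → |u n| ≤ M * q ^ n := by
    intro n
    induction n using Nat.strong_induction_on with
    | _ n ih =>
      intro hn2
      by_cases hsmall : n ≤ 7 * k + 1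
      · have hmem : n ∈ Finset.Icc 2 (7 * k + 1) := by
          simp only [Finset.mem_Icc]; omega
        have hle : |u n| * q⁻¹ ^ n ≤ M := by
          rw [hMdef]
          exact Finset.single_le_sum (f := fun j => |u j| * q⁻¹ ^ j)
            (fun j _ => by positivity) hmem
        calc |u n| = (|u n| * q⁻¹ ^ n) * q ^ n := by
              rw [mul_assoc, ← mul_pow, inv_mul_cancel₀ hq0.ne', one_pow, mul_one]
          _ ≤ M * q ^ n := mul_le_mul_of_nonneg_right hle (by positivity)
      · have hn : k + 2 ≤ n := by omega
        have hn7 : 7 * k + 2 ≤ n := by omega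
        have hxge : (7 : ℝ) * k + 2 ≤ (n : ℝ) := by exact_mod_cast hn7
        have hx0 : (0 : ℝ) < (n : ℝ) := by linarith
        have hxd : (0 : ℝ) < (n : ℝ) * ((n : ℝ) + 2 * k + 1) := by
          apply mul_pos hx0; linarith
        set c : ℝ := 2 * ((n : ℝ) + k) / ((n : ℝ) * ((n : ℝ) + 2 * k + 1)) with hcdef
        have hc0 : 0 ≤ c := by positivity
        have habs : |u n| ≤ c * ∑ j ∈ Finset.Icc (n - k) (n - 1), |u j| := by
          rw [key n hn, abs_mul, abs_neg, abs_of_nonneg hc0]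
          exact mul_le_mul_of_nonneg_left (Finset.abs_sum_le_sum_abs _ _) hc0
        have hcard : (Finset.Icc (n - k) (n - 1)).card = k := by
          rw [Nat.card_Icc]; omega
        have hsumle : ∑ j ∈ Finset.Icc (n - k) (n - 1), |u j|
            ≤ (k : ℝ) * (M * q ^ (n - k)) := by
          calc ∑ j ∈ Finset.Icc (n - k) (n - 1), |u j|
              ≤ ∑ _j ∈ Finset.Icc (n - k) (n - 1), M * q ^ (n - k) := by
                apply Finset.sum_le_sum
                intro j hj
                simp only [Finset.mem_Icc] at hj
                have hj2 : 2 ≤ j := by omega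
                have hjn : j < n := by omega
                calc |u j| ≤ M * q ^ j := ih j hjn hj2
                  _ ≤ M * q ^ (n - k) :=
                      mul_le_mul_of_nonneg_left
                        (pow_le_pow_of_le_one hq0.le hq1.le (by omega)) hM0
            _ = (k : ℝ) * (M * q ^ (n - k)) := by
                rw [Finset.sum_const, hcard, nsmul_eq_mul]
        have hc3 : c * k ≤ 1 / 3 := by
          rw [hcdef, div_mul_eq_mul_div, div_le_iff₀ hxd]
          nlinarith [mul_nonneg (sub_nonneg.2 hxge) (le_trans (by linarith) hxge),
            mul_nonneg (sub_nonneg.2 hxge) (by linarith : (0:ℝ) ≤ (k:ℝ)),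
            mul_le_mul_of_nonneg_left hxge (by linarith : (0:ℝ) ≤ (k:ℝ))]
        have hpow : q ^ (n - k) * q ^ k = q ^ n := by
          rw [← pow_add, show n - k + k = n from by omega]
        calc |u n| ≤ c * ((k : ℝ) * (M * q ^ (n - k))) :=
              le_trans habs (mul_le_mul_of_nonneg_left hsumle hc0)
          _ = (c * k) * (M * q ^ (n - k)) := by ring
          _ ≤ (1 / 3) * (M * q ^ (n - k)) :=
              mul_le_mul_of_nonneg_right hc3 (by positivity)
          _ ≤ q ^ k * (M * q ^ (n - k)) :=
              mul_le_mul_of_nonneg_right h3q (by positivity)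
          _ = M * q ^ n := by rw [← hpow]; ring
  -- summability
  have hgeom : Summable (fun i : ℕ => M * q ^ (i + 2)) := by
    have h := (summable_geometric_of_lt_one hq0.le hq1).mul_left (M * q ^ 2)
    apply h.congr
    intro i
    rw [pow_add]
    ring
  have habs_summ : Summable (fun i : ℕ => |u (i + 2)|) := by
    apply Summable.of_nonneg_of_le (fun i => abs_nonneg _)
      (fun i => hM (i + 2) (by omega)) hgeom
  have husum : Summable (fun i : ℕ => u (i + 2)) := habs_summ.of_abs
  refine ⟨habs_summ, ?_⟩
  -- telescoping formula for t
  have htel : ∀ n : ℕ, 1 ≤ n →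
      t n = t 1 + ∑ i ∈ Finset.range (n - 1), u (i + 2) := by
    intro n hn
    induction n, hn using Nat.le_induction with
    | base => simp
    | succ n hn ih =>
        have hun : u (n + 1) = t (n + 1) - t n := by
          have h := hu (n + 1) (by omega)
          simpa using h
        have hrange : ∑ i ∈ Finset.range n, u (i + 2)
            = ∑ i ∈ Finset.range (n - 1), u (i + 2) + u (n + 1) := by
          conv_lhs => rw [show n = n - 1 + 1 from by omega]
          rw [Finset.sum_range_succ, show n - 1 + 2 = n + 1 from by omega]
        rw [show n + 1 - 1 = n from rfl, hrange, ← add_assoc, ← ih, hun]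
        ring
  have ht1 : t 1 = s 1 / (2 * (k : ℝ) + 2) := by
    rw [ht 1]
    norm_num
    ring_nf
  have hlim : Tendsto (fun m : ℕ => t 1 + ∑ i ∈ Finset.range m, u (i + 2))
      atTop (𝓝 (t 1 + ∑' i : ℕ, u (i + 2))) :=
    (husum.hasSum.tendsto_sum_nat).const_add _
  have hlim2 : Tendsto (fun n : ℕ => t 1 + ∑ i ∈ Finset.range (n - 1), u (i + 2))
      atTop (𝓝 (t 1 + ∑' i : ℕ, u (i + 2))) :=
    hlim.comp (Filter.tendsto_sub_atTop_nat 1)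
  rw [← ht1]
  apply hlim2.congr'
  filter_upwards [Filter.eventually_ge_atTop 1] with n hn
  exact (htel n hn).symm
end

section
/- For every n ≥ 2, writing n = p_n·k + s with integers p_n ≥ 0 and 2 ≤ s ≤ k + 1, the n-th tail of the series satisfies |Σ_{i=n}^{∞} u_i^{(r)}| ≤ M·k·e² · 2^{p_n} / p_n!, where M = max{ |u_i^{(r)}| : 2 ≤ i ≤ 2k }. -/
/-!
The recursion for `a` gives
`t n - t (n - 1) = 2 (n + k) / (n (n + 2k + 1)) · (t (n - k - 1) - t (n - 1))`,
and the bracket is minus the sum of the `k` increments `u` just before `n`; so `|u n|` is at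
most `2k / n` times the largest `|u j|` in that window. Indices with `(n - 2) / k = p` satisfy
`n > p k`, so block by block the bound improves by a factor `2 / p`, giving
`|u n| ≤ M 2^p / p!`. Summing a tail, each block contributes at most `k` terms, and
`∑ 2^p / p! ≤ e²`.
-/

open Finset

open scoped Nat

section Factorial

variable {x : ℝ}

theorem pow_div_factorial_le_of_le (hx : 0 ≤ x) {a b : ℕ} (hxa : x ≤ a + 1) (hab : a ≤ b) :
    x ^ b / b ! ≤ x ^ a / a ! := by
  induction b, hab using Nat.le_induction with
  | base => rfl
  | succ b hab ih =>
    refine le_trans ?_ ih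
    have hxb : x ≤ b + 1 := hxa.trans (by gcongr)
    rw [pow_succ, Nat.factorial_succ, Nat.cast_mul, mul_comm ((b + 1 : ℕ) : ℝ), ← div_mul_div_comm]
    refine mul_le_of_le_one_right (by positivity) ?_
    rw [div_le_one (by positivity)]
    exact_mod_cast hxb

theorem pow_add_div_factorial_le (hx : 0 ≤ x) (p e : ℕ) :
    x ^ (p + e) / (p + e)! ≤ x ^ p / p ! * (x ^ e / e !) := by
  rw [pow_add, div_mul_div_comm]
  gcongr
  exact_mod_cast Nat.le_of_dvd (p + e).factorial_pos
    (Nat.factorial_mul_factorial_dvd_factorial_add p e)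

end Factorial

theorem sum_range_mul_comp_div {k : ℕ} (hk : 0 < k) (f : ℕ → ℝ) (N : ℕ) :
    ∑ i ∈ range (k * N), f (i / k) = k * ∑ m ∈ range N, f m := by
  induction N with
  | zero => simp
  | succ N ih =>
    have hblock : ∀ i ∈ range k, f ((k * N + i) / k) = f N := fun i hi => by
      rw [Nat.mul_add_div hk, Nat.div_eq_of_lt (mem_range.mp hi), add_zero]
    rw [mul_add_one, sum_range_add, ih, sum_congr rfl hblock, sum_const, card_range,
      nsmul_eq_mul, sum_range_succ, mul_add]

theorem sum_range_comp_div_le {k : ℕ} (hk : 0 < k) {f : ℕ → ℝ} (hf : ∀ m, 0 ≤ f m) (N : ℕ) :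
    ∑ i ∈ range N, f (i / k) ≤ k * ∑ m ∈ range N, f m := by
  rw [← sum_range_mul_comp_div hk]
  exact sum_le_sum_of_subset_of_nonneg (range_subset_range.mpr (Nat.le_mul_of_pos_left N hk))
    fun _ _ _ => hf _

theorem sum_range_pow_div_factorial_comp_div_le {k : ℕ} (hk : 0 < k) {x : ℝ} (hx : 0 ≤ x)
    (N : ℕ) : ∑ i ∈ range N, x ^ (i / k) / (i / k)! ≤ k * Real.exp x :=
  (sum_range_comp_div_le hk (fun _ => by positivity) N).trans
    (mul_le_mul_of_nonneg_left (Real.sum_le_exp_of_nonneg hx N) (Nat.cast_nonneg k))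

def IsWindowContraction (k : ℕ) (u : ℕ → ℝ) : Prop :=
  ∀ n, k + 2 ≤ n → ∀ B, (∀ j ∈ Ico (n - k) n, |u j| ≤ B) → |u n| ≤ 2 * k * B / n

section Parking

variable {k : ℕ} {a s t u : ℕ → ℝ}

theorem parking_partialSum_rec
    (ha_rec : ∀ n : ℕ, k + 2 ≤ n →
      a n = 2 / ((n : ℝ) - k - 1) * ∑ i ∈ Finset.Icc 1 (n - k - 1), a i)
    (hs : ∀ n : ℕ, s n = ∑ i ∈ Finset.Icc 1 n, a i) {n : ℕ} (hn : k + 2 ≤ n) :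
    s n = s (n - 1) + 2 / ((n : ℝ) - k - 1) * s (n - k - 1) := by
  obtain ⟨m, rfl⟩ : ∃ m, n = m + 1 := ⟨n - 1, by omega⟩
  rw [hs, hs, hs, ← ha_rec _ hn, sum_Icc_succ_top (by omega), Nat.add_sub_cancel]

theorem parking_normalized_rec
    (ha_rec : ∀ n : ℕ, k + 2 ≤ n →
      a n = 2 / ((n : ℝ) - k - 1) * ∑ i ∈ Finset.Icc 1 (n - k - 1), a i)
    (hs : ∀ n : ℕ, s n = ∑ i ∈ Finset.Icc 1 n, a i)
    (ht : ∀ n : ℕ, t n = s n / ((n : ℝ) * ((n : ℝ) + 2 * k + 1))) {n : ℕ} (hn : k + 2 ≤ n) :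
    t n - t (n - 1) =
      2 * (n + k) / (n * (n + 2 * k + 1)) * (t (n - k - 1) - t (n - 1)) := by
  have hn' : (k : ℝ) + 2 ≤ n := by exact_mod_cast hn
  have hcast1 : ((n - 1 : ℕ) : ℝ) = n - 1 := by push_cast [Nat.cast_sub (by omega : 1 ≤ n)]; ring
  have hcastk : ((n - k - 1 : ℕ) : ℝ) = n - k - 1 := by
    push_cast [Nat.cast_sub (by omega : 1 ≤ n - k), Nat.cast_sub (by omega : k ≤ n)]; ring
  have h1 : (n : ℝ) - k - 1 ≠ 0 := by linarith
  have h2 : (n : ℝ) - 1 ≠ 0 := by linarith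
  have h3 : (n : ℝ) + k ≠ 0 := by linarith
  have h4 : (n : ℝ) + 2 * k ≠ 0 := by linarith
  have h5 : (n : ℝ) ≠ 0 := by linarith
  have h6 : (n : ℝ) + 2 * k + 1 ≠ 0 := by linarith
  have ht1 : t (n - 1) = s (n - 1) / (((n : ℝ) - 1) * (n + 2 * k)) := by
    rw [ht, hcast1]; ring_nf
  have htk : t (n - k - 1) = s (n - k - 1) / (((n : ℝ) - k - 1) * (n + k)) := by
    rw [ht, hcastk]; ring_nf
  rw [ht n, ht1, htk, parking_partialSum_rec ha_rec hs hn]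
  field_simp
  ring

theorem parking_isWindowContraction
    (ha_rec : ∀ n : ℕ, k + 2 ≤ n →
      a n = 2 / ((n : ℝ) - k - 1) * ∑ i ∈ Finset.Icc 1 (n - k - 1), a i)
    (hs : ∀ n : ℕ, s n = ∑ i ∈ Finset.Icc 1 n, a i)
    (ht : ∀ n : ℕ, t n = s n / ((n : ℝ) * ((n : ℝ) + 2 * k + 1)))
    (hu : ∀ n : ℕ, 2 ≤ n → u n = t n - t (n - 1)) :
    IsWindowContraction k u := by
  intro n hn B hB
  have hn' : (k : ℝ) + 2 ≤ n := by exact_mod_cast hn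
  have hn0 : (0 : ℝ) < n := by linarith [(k.cast_nonneg : (0 : ℝ) ≤ k)]
  have hwindow : t (n - 1) - t (n - k - 1) = ∑ j ∈ Ico (n - k - 1) (n - 1), u (j + 1) := by
    rw [← sum_Ico_sub (f := t) (by omega)]
    exact sum_congr rfl fun j hj => by rw [hu _ (by simp at hj; omega), Nat.add_sub_cancel]
  have hwindow_le : |t (n - k - 1) - t (n - 1)| ≤ k * B := by
    rw [abs_sub_comm, hwindow]
    calc |∑ j ∈ Ico (n - k - 1) (n - 1), u (j + 1)|
        ≤ ∑ j ∈ Ico (n - k - 1) (n - 1), |u (j + 1)| := abs_sum_le_sum_abs _ _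
      _ ≤ (Ico (n - k - 1) (n - 1)).card • B :=
          sum_le_card_nsmul _ _ _ fun j hj => hB _ (by simp at hj ⊢; omega)
      _ = k * B := by rw [Nat.card_Ico, nsmul_eq_mul]; congr 2; omega
  have hcoef : 2 * ((n : ℝ) + k) / (n * (n + 2 * k + 1)) ≤ 2 / n := by
    rw [div_le_div_iff₀ (by positivity) (by positivity)]
    nlinarith
  calc |u n| = 2 * ((n : ℝ) + k) / (n * (n + 2 * k + 1)) * |t (n - k - 1) - t (n - 1)| := by
        rw [hu n (by omega), parking_normalized_rec ha_rec hs ht hn, abs_mul,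
          abs_of_nonneg (by positivity)]
    _ ≤ 2 / n * (k * B) :=
        mul_le_mul hcoef hwindow_le (abs_nonneg _) (by positivity)
    _ = 2 * k * B / n := by ring

end Parking

section IsWindowContraction

variable {k : ℕ} {u : ℕ → ℝ} {M : ℝ}

theorem IsWindowContraction.abs_le_of_le_two_mul_add_one (hk : 0 < k)
    (hM : ∀ j, 2 ≤ j → j ≤ 2 * k → |u j| ≤ M)
    (hwin : IsWindowContraction k u)
    {j : ℕ} (hj2 : 2 ≤ j) (hj : j ≤ 2 * k + 1) : |u j| ≤ M := by
  obtain hj | rfl := hj.lt_or_eq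
  · exact hM j hj2 (by omega)
  have hM0 : 0 ≤ M := (abs_nonneg _).trans (hM 2 le_rfl (by omega))
  have hwindow : ∀ i ∈ Ico (2 * k + 1 - k) (2 * k + 1), |u i| ≤ M := fun i hi => by
    simp only [mem_Ico] at hi
    exact hM i (by omega) (by omega)
  refine (hwin _ (by omega) M hwindow).trans ?_
  rw [div_le_iff₀ (by positivity)]
  push_cast
  nlinarith

theorem IsWindowContraction.abs_le_pow_div_factorial (hk : 0 < k)
    (hM : ∀ j, 2 ≤ j → j ≤ 2 * k → |u j| ≤ M)
    (hwin : IsWindowContraction k u)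
    {j : ℕ} (hj : 2 ≤ j) : |u j| ≤ M * (2 ^ ((j - 2) / k) / ((j - 2) / k)!) := by
  have hM0 : 0 ≤ M := (abs_nonneg _).trans (hM 2 le_rfl (by omega))
  induction j using Nat.strong_induction_on with
  | _ j ih =>
  obtain hp | hp := le_or_gt ((j - 2) / k) 1
  · have hj' : j ≤ 2 * k + 1 := by
      have := (Nat.div_lt_iff_lt_mul hk).mp (Nat.lt_succ_of_le hp); omega
    have hc : (1 : ℝ) ≤ 2 ^ ((j - 2) / k) / ((j - 2) / k)! := by
      interval_cases (j - 2) / k <;> norm_num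
    exact (hwin.abs_le_of_le_two_mul_add_one hk hM hj hj').trans
      (le_mul_of_one_le_right hM0 hc)
  obtain ⟨q, hq⟩ : ∃ q, (j - 2) / k = q + 1 := ⟨(j - 2) / k - 1, by omega⟩
  have hqk : q * k + k ≤ j - 2 := by rw [← add_one_mul, ← hq]; exact Nat.div_mul_le_self _ _
  have hwindow : ∀ i ∈ Ico (j - k) j, |u i| ≤ M * (2 ^ q / q !) := fun i hi => by
    simp only [mem_Ico] at hi
    have hqi : q ≤ (i - 2) / k := (Nat.le_div_iff_mul_le hk).mpr (by omega)
    refine (ih i hi.2 (by omega)).trans (mul_le_mul_of_nonneg_left ?_ hM0)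
    exact pow_div_factorial_le_of_le zero_le_two (by norm_cast; omega) hqi
  have hjq : ((q + 1 : ℕ) : ℝ) * k ≤ j := by
    exact_mod_cast (by rw [add_one_mul]; omega : (q + 1) * k ≤ j)
  rw [hq]
  calc |u j| ≤ 2 * k * (M * (2 ^ q / q !)) / j := hwin j (by omega) _ hwindow
    _ ≤ 2 * k * (M * (2 ^ q / q !)) / ((q + 1 : ℕ) * k) := by gcongr
    _ = M * (2 ^ (q + 1) / (q + 1)!) := by
        rw [pow_succ, Nat.factorial_succ]
        push_cast
        field_simp

theorem IsWindowContraction.abs_add_le_pow_div_factorial_mul (hk : 0 < k)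
    (hM : ∀ j, 2 ≤ j → j ≤ 2 * k → |u j| ≤ M)
    (hwin : IsWindowContraction k u)
    {n p q : ℕ} (hn : n = p * k + q) (hq2 : 2 ≤ q) (hqk : q ≤ k + 1) (i : ℕ) :
    |u (n + i)| ≤ M * (2 ^ p / p !) * (2 ^ (i / k) / (i / k)!) := by
  have hM0 : 0 ≤ M := (abs_nonneg _).trans (hM 2 le_rfl (by omega))
  obtain hpi | hpi := Nat.eq_zero_or_pos (p + i / k)
  · obtain ⟨rfl, hik⟩ := Nat.add_eq_zero_iff.mp hpi
    have hi : i < k := by rwa [Nat.div_eq_zero_iff_lt hk] at hik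
    simpa [hik] using hM (n + i) (by omega) (by omega)
  have hdiv : (n + i - 2) / k = p + (q - 2 + i) / k := by
    rw [show n + i - 2 = (q - 2 + i) + k * p by rw [hn]; ring_nf; omega,
      Nat.add_mul_div_left _ _ hk, add_comm]
  have hmono : i / k ≤ (q - 2 + i) / k := Nat.div_le_div_right (by omega)
  calc |u (n + i)| ≤ M * (2 ^ (p + (q - 2 + i) / k) / (p + (q - 2 + i) / k)!) := by
        rw [← hdiv]; exact hwin.abs_le_pow_div_factorial hk hM (by omega)
    _ ≤ M * (2 ^ (p + i / k) / (p + i / k)!) := by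
        gcongr M * ?_
        exact pow_div_factorial_le_of_le zero_le_two (by norm_cast; omega) (by omega)
    _ ≤ M * (2 ^ p / p ! * (2 ^ (i / k) / (i / k)!)) := by
        gcongr M * ?_
        exact pow_add_div_factorial_le zero_le_two _ _
    _ = M * (2 ^ p / p !) * (2 ^ (i / k) / (i / k)!) := by ring

end IsWindowContraction

theorem parking_tail_bound_general
    (k : ℕ) (hk : 1 ≤ k)
    (a s t u : ℕ → ℝ)
    (ha_rec : ∀ n : ℕ, k + 2 ≤ n →
      a n = 2 / ((n : ℝ) - k - 1) * ∑ i ∈ Finset.Icc 1 (n - k - 1), a i)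
    (hs : ∀ n : ℕ, s n = ∑ i ∈ Finset.Icc 1 n, a i)
    (ht : ∀ n : ℕ, t n = s n / ((n : ℝ) * ((n : ℝ) + 2 * k + 1)))
    (hu : ∀ n : ℕ, 2 ≤ n → u n = t n - t (n - 1))
    (M : ℝ)
    (hM : IsGreatest {x : ℝ | ∃ i : ℕ, 2 ≤ i ∧ i ≤ 2 * k ∧ x = |u i|} M) :
    ∀ n p q : ℕ, 2 ≤ n → n = p * k + q → 2 ≤ q → q ≤ k + 1 →
      |∑' i : ℕ, u (n + i)| ≤
        M * k * Real.exp 2 * 2 ^ p / (p.factorial : ℝ) := by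
  intro n p q _ hn hq2 hqk
  have hMle : ∀ j, 2 ≤ j → j ≤ 2 * k → |u j| ≤ M := fun j hj2 hj => hM.2 ⟨j, hj2, hj, rfl⟩
  have hM0 : 0 ≤ M := (abs_nonneg _).trans (hMle 2 le_rfl (by omega))
  have hterm := (parking_isWindowContraction ha_rec hs ht hu).abs_add_le_pow_div_factorial_mul
    hk hMle hn hq2 hqk
  have hpartial : ∀ N, ∑ i ∈ range N, |u (n + i)| ≤ M * (2 ^ p / p !) * (k * Real.exp 2) :=
    fun N => (sum_le_sum fun i _ => hterm i).trans <| by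
      rw [← mul_sum]
      exact mul_le_mul_of_nonneg_left (sum_range_pow_div_factorial_comp_div_le hk zero_le_two N)
        (by positivity)
  calc |∑' i : ℕ, u (n + i)| ≤ ∑' i : ℕ, |u (n + i)| :=
        norm_tsum_le_tsum_norm (f := fun i => u (n + i))
          (summable_of_sum_range_le (fun _ => abs_nonneg _) hpartial)
    _ ≤ M * (2 ^ p / p !) * (k * Real.exp 2) :=
        Real.tsum_le_of_sum_range_le (fun _ => abs_nonneg _) hpartial
    _ = M * k * Real.exp 2 * 2 ^ p / (p.factorial : ℝ) := by ring

/-- Rényi parking, discrete model: writing `n = pₙ·k + q` with `pₙ ≥ 0` and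
`2 ≤ q ≤ k+1`, the `n`-th tail of the series `Σ u i` satisfies
`|Σ_{i=n}^{∞} u i| ≤ M·k·e² · 2^{pₙ} / pₙ!`, where
`M = max{|u i| : 2 ≤ i ≤ 2k}`. -/
theorem parking_tail_bound
    (k r : ℕ) (hk : 1 ≤ k) (hkr : k ≤ r) (hrk : r ≤ 2 * k)
    (a s t u : ℕ → ℝ)
    (ha_init : ∀ n : ℕ, 1 ≤ n → n ≤ k + 1 →
      a n = if n = r - k + 1 then 1 else 0)
    (ha_rec : ∀ n : ℕ, k + 2 ≤ n →
      a n = 2 / ((n : ℝ) - k - 1) * ∑ i ∈ Finset.Icc 1 (n - k - 1), a i)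
    (hs : ∀ n : ℕ, s n = ∑ i ∈ Finset.Icc 1 n, a i)
    (ht : ∀ n : ℕ, t n = s n / ((n : ℝ) * ((n : ℝ) + 2 * k + 1)))
    (hu : ∀ n : ℕ, 2 ≤ n → u n = t n - t (n - 1))
    (M : ℝ)
    (hM : IsGreatest {x : ℝ | ∃ i : ℕ, 2 ≤ i ∧ i ≤ 2 * k ∧ x = |u i|} M) :
    ∀ n p q : ℕ, 2 ≤ n → n = p * k + q → 2 ≤ q → q ≤ k + 1 →
      |∑' i : ℕ, u (n + i)| ≤
        M * k * Real.exp 2 * 2 ^ p / (p.factorial : ℝ) :=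
  parking_tail_bound_general k hk a s t u ha_rec hs ht hu M hM
end

section
/- For every real a > 0 there exists a constant C > 0 such that |t_n^{(r)} − t_∞^{(r)}| ≤ C·a^n for all n ≥ 1; that is, t_n^{(r)} converges to its limit faster than any exponential. -/
open Finset Filter Topology

/-- Rényi parking, discrete model: `t n` converges to its limit `t_∞` faster
than any exponential: for every `a > 0` there is `C > 0` with
`|t n - t_∞| ≤ C·aⁿ` for all `n ≥ 1`. -/
theorem parking_t_superexp_convergence
    (k r : ℕ) (hk : 1 ≤ k) (hkr : k ≤ r) (hrk : r ≤ 2 * k)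
    (a s t u : ℕ → ℝ)
    (ha_init : ∀ n : ℕ, 1 ≤ n → n ≤ k + 1 →
      a n = if n = r - k + 1 then 1 else 0)
    (ha_rec : ∀ n : ℕ, k + 2 ≤ n →
      a n = 2 / ((n : ℝ) - k - 1) * ∑ i ∈ Finset.Icc 1 (n - k - 1), a i)
    (hs : ∀ n : ℕ, s n = ∑ i ∈ Finset.Icc 1 n, a i)
    (ht : ∀ n : ℕ, t n = s n / ((n : ℝ) * ((n : ℝ) + 2 * k + 1)))
    (hu : ∀ n : ℕ, 2 ≤ n → u n = t n - t (n - 1))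
    (tinf : ℝ) (htinf : Filter.Tendsto t Filter.atTop (𝓝 tinf)) :
    ∀ c : ℝ, 0 < c → ∃ C : ℝ, 0 < C ∧
      ∀ n : ℕ, 1 ≤ n → |t n - tinf| ≤ C * c ^ n := by
  -- it suffices to treat `0 < c < 1`
  suffices H : ∀ c : ℝ, 0 < c → c < 1 → ∃ C : ℝ, 0 < C ∧
      ∀ n : ℕ, 1 ≤ n → |t n - tinf| ≤ C * c ^ n by
    intro c hc
    rcases lt_or_ge c 1 with h1 | h1
    · exact H c hc h1
    · obtain ⟨C, hC, hb⟩ := H (1/2) (by norm_num) (by norm_num)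
      refine ⟨C, hC, fun n hn => (hb n hn).trans ?_⟩
      have hp : (1/2 : ℝ) ^ n ≤ c ^ n := by
        apply pow_le_pow_left₀ (by norm_num)
        linarith
      exact mul_le_mul_of_nonneg_left hp hC.le
  intro c hc hc1
  set w : ℕ → ℝ := fun n => t (n + 1) - t n with hwdef
  -- s in terms of t
  have hst : ∀ m : ℕ, 1 ≤ m → s m = (m : ℝ) * ((m : ℝ) + 2 * k + 1) * t m := by
    intro m hm
    have h0 : (m : ℝ) ≠ 0 := by
      exact Nat.cast_ne_zero.mpr (by omega)
    have h1 : (m : ℝ) + 2 * k + 1 ≠ 0 := by positivity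
    rw [ht m]
    field_simp
  -- telescoping
  have htel : ∀ m n : ℕ, m ≤ n → t n - t m = ∑ j ∈ Finset.Ico m n, w j := by
    intro m n h
    rw [Finset.sum_Ico_eq_sub _ h]
    simp only [hwdef]
    rw [Finset.sum_range_sub (fun i => t i), Finset.sum_range_sub (fun i => t i)]
    ring
  -- the key recurrence
  have key : ∀ n : ℕ, k + 1 ≤ n →
      ((n : ℝ) + 1) * ((n : ℝ) + 2 * k + 2) * w n
        = 2 * ((n : ℝ) + k + 1) * (t (n - k) - t n) := by
    intro n hn
    have hn1 : 1 ≤ n := le_trans (by omega) hn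
    have hkn : (k : ℝ) + 1 ≤ (n : ℝ) := by exact_mod_cast hn
    have hne : (n : ℝ) - k ≠ 0 := by linarith
    have hcast : ((n - k : ℕ) : ℝ) = (n : ℝ) - k := by
      rw [Nat.cast_sub (by omega)]
    have e1 : a (n + 1) = 2 * ((n : ℝ) + k + 1) * t (n - k) := by
      have h := ha_rec (n + 1) (by omega)
      rw [show n + 1 - k - 1 = n - k from by omega, ← hs (n - k)] at h
      rw [h, hst (n - k) (by omega), hcast]
      push_cast
      have h3 : (n : ℝ) + 1 - (k : ℝ) - 1 = (n : ℝ) - (k : ℝ) := by ring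
      rw [h3]
      field_simp
      ring
    have h2 : s (n + 1) = s n + a (n + 1) := by
      rw [hs (n + 1), hs n, Finset.sum_Icc_succ_top (by omega : 1 ≤ n + 1)]
    rw [hst (n + 1) (by omega), hst n hn1, e1] at h2
    push_cast at h2
    simp only [hwdef]
    linear_combination h2
  -- the basic bound
  have bound : ∀ n : ℕ, k + 1 ≤ n →
      |w n| ≤ 2 / ((n : ℝ) + 1) * ∑ j ∈ Finset.Ico (n - k) n, |w j| := by
    intro n hn
    have hD : (0 : ℝ) < ((n : ℝ) + 1) * ((n : ℝ) + 2 * k + 2) := by positivity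
    have habs : |t (n - k) - t n| ≤ ∑ j ∈ Finset.Ico (n - k) n, |w j| := by
      rw [abs_sub_comm, htel (n - k) n (by omega)]
      exact Finset.abs_sum_le_sum_abs _ _
    have hwn : w n = 2 * ((n : ℝ) + k + 1) / (((n : ℝ) + 1) * ((n : ℝ) + 2 * k + 2))
        * (t (n - k) - t n) := by
      rw [div_mul_eq_mul_div, eq_div_iff hD.ne']
      linear_combination key n hn
    have hcoef0 : (0 : ℝ) ≤ 2 * ((n : ℝ) + k + 1) / (((n : ℝ) + 1) * ((n : ℝ) + 2 * k + 2)) := by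
      positivity
    have hcoef : 2 * ((n : ℝ) + k + 1) / (((n : ℝ) + 1) * ((n : ℝ) + 2 * k + 2))
        ≤ 2 / ((n : ℝ) + 1) := by
      rw [div_le_div_iff₀ hD (by positivity)]
      nlinarith [Nat.cast_nonneg (α := ℝ) n, Nat.cast_nonneg (α := ℝ) k]
    calc |w n| = 2 * ((n : ℝ) + k + 1) / (((n : ℝ) + 1) * ((n : ℝ) + 2 * k + 2))
          * |t (n - k) - t n| := by
          rw [hwn, abs_mul, abs_of_nonneg hcoef0]
      _ ≤ 2 / ((n : ℝ) + 1) * ∑ j ∈ Finset.Ico (n - k) n, |w j| := by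
          apply mul_le_mul hcoef habs (abs_nonneg _)
          positivity
  -- choose the threshold N
  obtain ⟨N0, hN0⟩ := exists_nat_ge (2 * (k : ℝ) / c ^ k)
  set N : ℕ := max N0 (k + 1) with hNdef
  have hNk : k + 1 ≤ N := le_max_right _ _
  have hN0' : 2 * (k : ℝ) / c ^ k ≤ N := le_trans hN0 (by exact_mod_cast le_max_left N0 (k+1))
  set C : ℝ := 1 + ∑ j ∈ Finset.range N, |w j| / c ^ (j + 1) with hCdef
  have hCpos : 0 < C := by
    have : (0:ℝ) ≤ ∑ j ∈ Finset.range N, |w j| / c ^ (j + 1) :=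
      Finset.sum_nonneg fun j _ => by positivity
    rw [hCdef]
    linarith
  have base : ∀ j : ℕ, j < N → |w j| ≤ C * c ^ (j + 1) := by
    intro j hj
    have h1 : |w j| / c ^ (j + 1) ≤ ∑ j ∈ Finset.range N, |w j| / c ^ (j + 1) :=
      Finset.single_le_sum (f := fun i => |w i| / c ^ (i + 1))
        (fun i _ => by positivity) (Finset.mem_range.mpr hj)
    have h2 : |w j| / c ^ (j + 1) ≤ C := by rw [hCdef]; linarith
    rwa [div_le_iff₀ (pow_pos hc _)] at h2
  -- superexponential decay of increments, by strong induction
  have main : ∀ n : ℕ, |w n| ≤ C * c ^ (n + 1) := by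
    intro n
    induction n using Nat.strong_induction_on with
    | _ n ih =>
      rcases lt_or_ge n N with h | h
      · exact base n h
      · have hnk : k + 1 ≤ n := le_trans hNk h
        have hcN : 2 * (k : ℝ) ≤ ((n : ℝ) + 1) * c ^ k := by
          have hcpow : (0:ℝ) < c ^ k := pow_pos hc _
          have hNn : (N : ℝ) ≤ (n : ℝ) := by exact_mod_cast h
          have : 2 * (k : ℝ) ≤ (N : ℝ) * c ^ k := by
            rw [div_le_iff₀ hcpow] at hN0'; linarith
          nlinarith
        calc |w n| ≤ 2 / ((n : ℝ) + 1) * ∑ j ∈ Finset.Ico (n - k) n, |w j| := bound n hnk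
          _ ≤ 2 / ((n : ℝ) + 1) * ∑ j ∈ Finset.Ico (n - k) n, C * c ^ (n - k + 1) := by
              apply mul_le_mul_of_nonneg_left _ (by positivity)
              apply Finset.sum_le_sum
              intro j hj
              rw [Finset.mem_Ico] at hj
              refine (ih j hj.2).trans ?_
              apply mul_le_mul_of_nonneg_left _ hCpos.le
              exact pow_le_pow_of_le_one hc.le hc1.le (by omega)
          _ = 2 / ((n : ℝ) + 1) * ((k : ℝ) * (C * c ^ (n - k + 1))) := by
              rw [Finset.sum_const, Nat.card_Ico,
                show n - (n - k) = k from by omega, nsmul_eq_mul]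
          _ ≤ C * c ^ (n + 1) := by
              have hpow : c ^ (n - k + 1) * c ^ k = c ^ (n + 1) := by
                rw [← pow_add]
                congr 1
                omega
              have hn1 : (0:ℝ) < (n : ℝ) + 1 := by positivity
              rw [div_mul_eq_mul_div, div_le_iff₀ hn1]
              calc 2 * ((k : ℝ) * (C * c ^ (n - k + 1)))
                  = (2 * (k : ℝ)) * (C * c ^ (n - k + 1)) := by ring
                _ ≤ (((n : ℝ) + 1) * c ^ k) * (C * c ^ (n - k + 1)) := by
                    apply mul_le_mul_of_nonneg_right hcN (by positivity)
                _ = C * c ^ (n + 1) * ((n : ℝ) + 1) := by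
                    rw [← hpow]; ring
  -- tail bound
  have h1c : (0:ℝ) < 1 - c := by linarith
  have tail : ∀ n m : ℕ, n ≤ m → |t m - t n| ≤ C * c ^ (n + 1) / (1 - c) := by
    intro n m hnm
    rw [htel n m hnm]
    calc |∑ j ∈ Finset.Ico n m, w j| ≤ ∑ j ∈ Finset.Ico n m, |w j| :=
          Finset.abs_sum_le_sum_abs _ _
      _ ≤ ∑ j ∈ Finset.Ico n m, C * c ^ (j + 1) := Finset.sum_le_sum fun j _ => main j
      _ = C * c ^ (n + 1) * ∑ i ∈ Finset.range (m - n), c ^ i := by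
          rw [Finset.sum_Ico_eq_sum_range, Finset.mul_sum]
          apply Finset.sum_congr rfl
          intro i _
          rw [show n + i + 1 = (n + 1) + i from by omega, pow_add]
          ring
      _ ≤ C * c ^ (n + 1) / (1 - c) := by
          have hg : ∑ i ∈ Finset.range (m - n), c ^ i ≤ 1 / (1 - c) := by
            rw [geom_sum_eq hc1.ne]
            have heq : (c ^ (m - n) - 1) / (c - 1) = (1 - c ^ (m - n)) / (1 - c) := by
              rw [div_eq_div_iff (by linarith) (by linarith)]
              ring
            have hL : (0:ℝ) ≤ c ^ (m - n) := by positivity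
            rw [heq, div_le_div_iff₀ h1c h1c]
            nlinarith
          calc C * c ^ (n + 1) * ∑ i ∈ Finset.range (m - n), c ^ i
              ≤ C * c ^ (n + 1) * (1 / (1 - c)) :=
                mul_le_mul_of_nonneg_left hg (by positivity)
            _ = C * c ^ (n + 1) / (1 - c) := by ring
  refine ⟨C * c / (1 - c), div_pos (mul_pos hCpos hc) h1c, fun n _ => ?_⟩
  have hlim : Filter.Tendsto (fun m => |t m - t n|) Filter.atTop (𝓝 |tinf - t n|) :=
    (htinf.sub_const (t n)).abs
  have hle : |tinf - t n| ≤ C * c ^ (n + 1) / (1 - c) :=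
    le_of_tendsto hlim (Filter.eventually_atTop.mpr ⟨n, fun m hm => tail n m hm⟩)
  rw [abs_sub_comm]
  calc |tinf - t n| ≤ C * c ^ (n + 1) / (1 - c) := hle
    _ = C * c / (1 - c) * c ^ n := by rw [pow_succ]; ring
end

section
/- For every real a > 0 there exists a constant C > 0 such that |s_n^{(r)} − n(n + 2k + 1)·t_∞^{(r)}| ≤ C·a^n for all n ≥ 1. -/
/-!
Write `d n = t (n + 1) - t n`. Since `s n = n (n + 2k + 1) t n`, the recursion for `a` becomes
`(n + 1) (n + 2k + 2) d n = 2 (n + k + 1) (t (n - k) - t n) = -2 (n + k + 1) (d (n - k) + ⋯ + d (n - 1))`,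
so `n |d n|` is at most twice the sum of the `k` preceding increments. For any `c ∈ (0, 1]` a
strong induction then gives `|d n| ≤ C cⁿ`, the finitely many initial terms being absorbed into
`C`. Summing the geometric tail bounds `|t n - t∞|`, and the factor `n (n + 2k + 1)` in
`s n - n (n + 2k + 1) t∞ = n (n + 2k + 1) (t n - t∞)` is at most `(2k + 2) 4ⁿ`, which costs only a
change of `c`.
-/

open Finset Filter Topology

theorem exists_abs_le_mul_pow_of_mul_abs_le_sum {d : ℕ → ℝ} {k m₀ : ℕ} {K : ℝ} (hK : 0 ≤ K)
    (hd : ∀ m, m₀ ≤ m → (m : ℝ) * |d m| ≤ K * ∑ i ∈ range k, |d (m - k + i)|)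
    {c : ℝ} (hc : 0 < c) (hc1 : c ≤ 1) : ∃ C > 0, ∀ n, |d n| ≤ C * c ^ n := by
  obtain ⟨N, hN⟩ := exists_nat_ge (max (K * k / c ^ k) (max m₀ k))
  simp only [sup_le_iff, div_le_iff₀ (pow_pos hc k), Nat.cast_le] at hN
  obtain ⟨hKN, hm₀N, hkN⟩ := hN
  set C := 1 + ∑ n ∈ range (N + 1), |d n| / c ^ n
  have hC : 0 < C := by positivity
  refine ⟨C, hC, fun n => ?_⟩
  induction n using Nat.strong_induction_on with
  | _ n ih =>
  rcases lt_or_ge n (N + 1) with hn | hn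
  · have hle : |d n| / c ^ n ≤ C := by
      have := single_le_sum (f := fun n => |d n| / c ^ n) (fun _ _ => by positivity)
        (mem_range.2 hn)
      linarith
    rwa [div_le_iff₀ (pow_pos hc n)] at hle
  · have hwindow : ∑ i ∈ range k, |d (n - k + i)| ≤ k * (C * c ^ (n - k)) := by
      calc ∑ i ∈ range k, |d (n - k + i)|
          ≤ ∑ _i ∈ range k, C * c ^ (n - k) := by
            refine sum_le_sum fun i hi => (ih _ (by grind)).trans ?_
            exact mul_le_mul_of_nonneg_left (pow_le_pow_of_le_one hc.le hc1 (by omega)) hC.le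
        _ = k * (C * c ^ (n - k)) := by simp
    have hn_pos : (0 : ℝ) < n := by exact_mod_cast (show 0 < n by omega)
    have hKn : K * k ≤ n * c ^ k :=
      hKN.trans (by gcongr; exact_mod_cast (show N ≤ n by omega))
    have hpow : c ^ (n - k) * c ^ k = c ^ n := by rw [← pow_add, Nat.sub_add_cancel (by omega)]
    refine le_of_mul_le_mul_left ?_ hn_pos
    calc (n : ℝ) * |d n| ≤ K * (k * (C * c ^ (n - k))) :=
          (hd n (by omega)).trans (by gcongr)
      _ = K * k * (C * c ^ (n - k)) := by ring
      _ ≤ n * c ^ k * (C * c ^ (n - k)) := by gcongr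
      _ = n * (C * c ^ n) := by rw [← hpow]; ring

theorem natCast_mul_add_le_mul_four_pow (n : ℕ) {x : ℝ} (hx : 0 ≤ x) :
    (n : ℝ) * (n + x) ≤ (1 + x) * 4 ^ n := by
  have hn : (n : ℝ) ≤ 2 ^ n := by exact_mod_cast Nat.lt_two_pow_self.le
  have h1 : (1 : ℝ) ≤ 2 ^ n := one_le_pow₀ (by norm_num)
  calc (n : ℝ) * (n + x) ≤ 2 ^ n * ((1 + x) * 2 ^ n) := by gcongr; nlinarith
    _ = (1 + x) * 4 ^ n := by rw [show (4 : ℝ) = 2 * 2 by norm_num, mul_pow]; ring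

section Parking

variable {k : ℕ} {a s t : ℕ → ℝ}

theorem parking_s_eq (hs : ∀ n : ℕ, s n = ∑ i ∈ Icc 1 n, a i)
    (ht : ∀ n : ℕ, t n = s n / ((n : ℝ) * ((n : ℝ) + 2 * k + 1))) (n : ℕ) :
    s n = n * (n + 2 * k + 1) * t n := by
  rcases n.eq_zero_or_pos with rfl | hn
  · simp [hs]
  · have : (n : ℝ) * (n + 2 * k + 1) ≠ 0 := by positivity
    rw [ht n, mul_div_cancel₀ _ this]

theorem parking_t_recurrence
    (ha_rec : ∀ n : ℕ, k + 2 ≤ n →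
      a n = 2 / ((n : ℝ) - k - 1) * ∑ i ∈ Icc 1 (n - k - 1), a i)
    (hs : ∀ n : ℕ, s n = ∑ i ∈ Icc 1 n, a i)
    (ht : ∀ n : ℕ, t n = s n / ((n : ℝ) * ((n : ℝ) + 2 * k + 1)))
    {m : ℕ} (hm : k + 1 ≤ m) :
    (m + 1 : ℝ) * (m + 2 * k + 2) * t (m + 1) =
      m * (m + 2 * k + 1) * t m + 2 * (m + k + 1) * t (m - k) := by
  have hmk : ((m - k : ℕ) : ℝ) = m - k := Nat.cast_sub (by omega)
  have hmk_pos : (0 : ℝ) < m - k := by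
    rw [← hmk]; exact_mod_cast (show 0 < m - k by omega)
  have ha : a (m + 1) = 2 / ((m : ℝ) - k) * s (m - k) := by
    rw [ha_rec (m + 1) (by omega), hs, show m + 1 - k - 1 = m - k by omega]
    push_cast
    ring_nf
  have hsucc : s (m + 1) = s m + a (m + 1) := by
    rw [hs, hs, sum_Icc_succ_top (by omega)]
  rw [parking_s_eq hs ht (m - k), hmk] at ha
  have hs_succ := parking_s_eq hs ht (m + 1)
  rw [hsucc, ha, parking_s_eq hs ht m] at hs_succ
  push_cast at hs_succ
  field_simp at hs_succ
  linear_combination -hs_succ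

theorem parking_mul_abs_increment_le
    (ha_rec : ∀ n : ℕ, k + 2 ≤ n →
      a n = 2 / ((n : ℝ) - k - 1) * ∑ i ∈ Icc 1 (n - k - 1), a i)
    (hs : ∀ n : ℕ, s n = ∑ i ∈ Icc 1 n, a i)
    (ht : ∀ n : ℕ, t n = s n / ((n : ℝ) * ((n : ℝ) + 2 * k + 1)))
    {m : ℕ} (hm : k + 1 ≤ m) :
    (m : ℝ) * |t (m + 1) - t m| ≤ 2 * ∑ i ∈ range k, |t (m - k + i + 1) - t (m - k + i)| := by
  have htelescope : ∑ i ∈ range k, (t (m - k + i + 1) - t (m - k + i)) = t m - t (m - k) := by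
    have := sum_range_sub (fun i => t (m - k + i)) k
    rwa [Nat.sub_add_cancel (by omega), Nat.add_zero] at this
  have hincr : (m + 1 : ℝ) * (m + 2 * k + 2) * (t (m + 1) - t m) =
      2 * (m + k + 1) * -∑ i ∈ range k, (t (m - k + i + 1) - t (m - k + i)) := by
    rw [htelescope]
    linear_combination parking_t_recurrence ha_rec hs ht hm
  have hpos : (0 : ℝ) < m + 2 * k + 2 := by positivity
  refine le_of_mul_le_mul_left ?_ hpos
  calc (m + 2 * k + 2 : ℝ) * (m * |t (m + 1) - t m|)
      ≤ |(m + 1 : ℝ) * (m + 2 * k + 2) * (t (m + 1) - t m)| := by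
        rw [abs_mul, abs_of_pos (by positivity : (0 : ℝ) < (m + 1) * (m + 2 * k + 2))]
        nlinarith [abs_nonneg (t (m + 1) - t m)]
    _ = 2 * (m + k + 1) * |∑ i ∈ range k, (t (m - k + i + 1) - t (m - k + i))| := by
        rw [hincr, abs_mul, abs_neg, abs_of_pos (by positivity : (0 : ℝ) < 2 * (m + k + 1))]
    _ ≤ (m + 2 * k + 2) * (2 * ∑ i ∈ range k, |t (m - k + i + 1) - t (m - k + i)|) := by
        have := abs_sum_le_sum_abs (fun i => t (m - k + i + 1) - t (m - k + i)) (range k)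
        have : (0 : ℝ) ≤ k := k.cast_nonneg
        nlinarith [abs_nonneg (∑ i ∈ range k, (t (m - k + i + 1) - t (m - k + i)))]

end Parking

theorem parking_s_asymptotics_general
    (k : ℕ)
    (a s t : ℕ → ℝ)
    (ha_rec : ∀ n : ℕ, k + 2 ≤ n →
      a n = 2 / ((n : ℝ) - k - 1) * ∑ i ∈ Finset.Icc 1 (n - k - 1), a i)
    (hs : ∀ n : ℕ, s n = ∑ i ∈ Finset.Icc 1 n, a i)
    (ht : ∀ n : ℕ, t n = s n / ((n : ℝ) * ((n : ℝ) + 2 * k + 1)))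
    (tinf : ℝ) (htinf : Filter.Tendsto t Filter.atTop (𝓝 tinf)) :
    ∀ c : ℝ, 0 < c → ∃ C : ℝ, 0 < C ∧
      ∀ n : ℕ, 1 ≤ n →
        |s n - (n : ℝ) * ((n : ℝ) + 2 * k + 1) * tinf| ≤ C * c ^ n := by
  intro c hc
  set q := min c 1 / 4 with hq
  have hq_pos : 0 < q := by positivity
  have hq_lt : q < 1 := by linarith [min_le_right c 1]
  obtain ⟨C, hC, hdecay⟩ := exists_abs_le_mul_pow_of_mul_abs_le_sum (d := fun m => t (m + 1) - t m)
    zero_le_two (fun m hm => parking_mul_abs_increment_le ha_rec hs ht hm) hq_pos hq_lt.le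
  have htail (n : ℕ) : |t n - tinf| ≤ C / (1 - q) * q ^ n := by
    have := dist_le_of_le_geometric_of_tendsto q C hq_lt
      (fun n => by rw [dist_comm, Real.dist_eq]; exact hdecay n) htinf n
    rw [Real.dist_eq] at this
    linarith [div_mul_eq_mul_div C (1 - q) (q ^ n)]
  have hC' : 0 < C / (1 - q) := div_pos hC (by linarith)
  refine ⟨(2 * k + 2) * (C / (1 - q)), mul_pos (by positivity) hC', fun n _ => ?_⟩
  calc |s n - n * (n + 2 * k + 1) * tinf| = n * (n + (2 * k + 1)) * |t n - tinf| := by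
        rw [parking_s_eq hs ht n, ← mul_sub, abs_mul, abs_of_nonneg (by positivity), add_assoc]
    _ ≤ (1 + (2 * k + 1)) * 4 ^ n * (C / (1 - q) * q ^ n) :=
        mul_le_mul (natCast_mul_add_le_mul_four_pow n (by positivity)) (htail n)
          (abs_nonneg _) (by positivity)
    _ = (2 * k + 2) * (C / (1 - q)) * (4 * q) ^ n := by rw [mul_pow]; ring
    _ ≤ (2 * k + 2) * (C / (1 - q)) * c ^ n := by
        gcongr
        linarith [min_le_left c 1]

/-- Rényi parking, discrete model: for every `a > 0` there is `C > 0` with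
`|s n - n(n+2k+1)·t_∞| ≤ C·aⁿ` for all `n ≥ 1`. -/
theorem parking_s_asymptotics
    (k r : ℕ) (hk : 1 ≤ k) (hkr : k ≤ r) (hrk : r ≤ 2 * k)
    (a s t u : ℕ → ℝ)
    (ha_init : ∀ n : ℕ, 1 ≤ n → n ≤ k + 1 →
      a n = if n = r - k + 1 then 1 else 0)
    (ha_rec : ∀ n : ℕ, k + 2 ≤ n →
      a n = 2 / ((n : ℝ) - k - 1) * ∑ i ∈ Finset.Icc 1 (n - k - 1), a i)
    (hs : ∀ n : ℕ, s n = ∑ i ∈ Finset.Icc 1 n, a i)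
    (ht : ∀ n : ℕ, t n = s n / ((n : ℝ) * ((n : ℝ) + 2 * k + 1)))
    (hu : ∀ n : ℕ, 2 ≤ n → u n = t n - t (n - 1))
    (tinf : ℝ) (htinf : Filter.Tendsto t Filter.atTop (𝓝 tinf)) :
    ∀ c : ℝ, 0 < c → ∃ C : ℝ, 0 < C ∧
      ∀ n : ℕ, 1 ≤ n →
        |s n - (n : ℝ) * ((n : ℝ) + 2 * k + 1) * tinf| ≤ C * c ^ n :=
  parking_s_asymptotics_general k a s t ha_rec hs ht tinf htinf
end

section
/- The limiting densities are normalized: Σ_{r=k}^{2k} D(k, r) = 1, i.e., Σ_{r=k}^{2k} 2(r + 1)·t_∞^{(r)} = 1. -/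
open Finset Filter Topology

/-- Rényi parking, discrete model: the limiting densities are normalized,
`Σ_{r=k}^{2k} D(k,r) = Σ_{r=k}^{2k} 2(r+1)·t_∞^{(r)} = 1`. -/
theorem parking_densities_normalized
    (k : ℕ) (hk : 1 ≤ k)
    (a : ℕ → ℕ → ℝ) (tinf : ℕ → ℝ)
    (ha_init : ∀ r : ℕ, k ≤ r → r ≤ 2 * k → ∀ n : ℕ, 1 ≤ n → n ≤ k + 1 →
      a r n = if n = r - k + 1 then 1 else 0)
    (ha_rec : ∀ r : ℕ, k ≤ r → r ≤ 2 * k → ∀ n : ℕ, k + 2 ≤ n →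
      a r n = 2 / ((n : ℝ) - k - 1) * ∑ i ∈ Finset.Icc 1 (n - k - 1), a r i)
    (htinf : ∀ r : ℕ, k ≤ r → r ≤ 2 * k →
      Filter.Tendsto
        (fun n : ℕ =>
          (∑ i ∈ Finset.Icc 1 n, a r i) / ((n : ℝ) * ((n : ℝ) + 2 * k + 1)))
        Filter.atTop (𝓝 (tinf r))) :
    ∑ r ∈ Finset.Icc k (2 * k), 2 * ((r : ℝ) + 1) * tinf r = 1 := by
  -- Gauss-type sum
  have gauss : ∀ m : ℕ, ∑ i ∈ Finset.Icc 1 m, 2 * ((i : ℝ) + k) =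
      (m : ℝ) * ((m : ℝ) + 2 * k + 1) := by
    intro m
    induction m with
    | zero => simp
    | succ m ih =>
      rw [Finset.sum_Icc_succ_top (by omega : 1 ≤ m + 1), ih]
      push_cast
      ring
  -- key: the weighted combination equals 2(n+k)
  have key : ∀ n : ℕ, 1 ≤ n →
      ∑ r ∈ Finset.Icc k (2 * k), 2 * ((r : ℝ) + 1) * a r n = 2 * ((n : ℝ) + k) := by
    intro n
    induction n using Nat.strong_induction_on with
    | _ n ih =>
      intro hn
      by_cases hle : n ≤ k + 1
      · -- initial segment
        have hsum : ∑ r ∈ Finset.Icc k (2 * k), 2 * ((r : ℝ) + 1) * a r n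
            = 2 * (((n + k - 1 : ℕ) : ℝ) + 1) * a (n + k - 1) n := by
          refine Finset.sum_eq_single (n + k - 1) ?_ ?_
          · intro r hr hne
            simp only [Finset.mem_Icc] at hr
            rw [ha_init r hr.1 hr.2 n hn hle, if_neg (by omega)]
            ring
          · intro h
            exfalso; apply h; simp only [Finset.mem_Icc]; omega
        rw [hsum, ha_init (n + k - 1) (by omega) (by omega) n hn hle,
          if_pos (by omega)]
        have hc : ((n + k - 1 : ℕ) : ℝ) = (n : ℝ) + k - 1 := by
          have h : (n + k - 1) + 1 = n + k := by omega
          have := congrArg (Nat.cast : ℕ → ℝ) h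
          push_cast at this
          linarith
        rw [hc]; ring
      · -- recursive case
        push_neg at hle
        have hn2 : k + 2 ≤ n := by omega
        set m := n - k - 1 with hm
        have hm1 : 1 ≤ m := by omega
        have hmcast : (m : ℝ) = (n : ℝ) - k - 1 := by
          have h : m + (k + 1) = n := by omega
          have := congrArg (Nat.cast : ℕ → ℝ) h
          push_cast at this
          linarith
        have hrw : ∀ r ∈ Finset.Icc k (2 * k), 2 * ((r : ℝ) + 1) * a r n
            = 2 / (m : ℝ) * (2 * ((r : ℝ) + 1) * ∑ i ∈ Finset.Icc 1 m, a r i) := by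
          intro r hr
          simp only [Finset.mem_Icc] at hr
          rw [ha_rec r hr.1 hr.2 n hn2, ← hm, ← hmcast]
          ring
        rw [Finset.sum_congr rfl hrw, ← Finset.mul_sum]
        have hswap : ∑ r ∈ Finset.Icc k (2 * k),
            2 * ((r : ℝ) + 1) * ∑ i ∈ Finset.Icc 1 m, a r i
            = ∑ i ∈ Finset.Icc 1 m, ∑ r ∈ Finset.Icc k (2 * k),
              2 * ((r : ℝ) + 1) * a r i := by
          simp_rw [Finset.mul_sum]
          exact Finset.sum_comm
        rw [hswap]
        have hinner : ∀ i ∈ Finset.Icc 1 m,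
            ∑ r ∈ Finset.Icc k (2 * k), 2 * ((r : ℝ) + 1) * a r i
            = 2 * ((i : ℝ) + k) := by
          intro i hi
          simp only [Finset.mem_Icc] at hi
          exact ih i (by omega) hi.1
        rw [Finset.sum_congr rfl hinner, gauss m]
        have hmne : (m : ℝ) ≠ 0 := by positivity
        field_simp
        nlinarith [hmcast]
  -- partial sums
  have part : ∀ n : ℕ, ∑ r ∈ Finset.Icc k (2 * k),
      2 * ((r : ℝ) + 1) * ∑ i ∈ Finset.Icc 1 n, a r i
      = (n : ℝ) * ((n : ℝ) + 2 * k + 1) := by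
    intro n
    have hswap : ∑ r ∈ Finset.Icc k (2 * k),
        2 * ((r : ℝ) + 1) * ∑ i ∈ Finset.Icc 1 n, a r i
        = ∑ i ∈ Finset.Icc 1 n, ∑ r ∈ Finset.Icc k (2 * k),
          2 * ((r : ℝ) + 1) * a r i := by
      simp_rw [Finset.mul_sum]
      exact Finset.sum_comm
    rw [hswap, Finset.sum_congr rfl (fun i hi => key i (Finset.mem_Icc.mp hi).1), gauss n]
  -- the combined sequence tends to the LHS
  have hT : Filter.Tendsto
      (fun n : ℕ => ∑ r ∈ Finset.Icc k (2 * k), 2 * ((r : ℝ) + 1) *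
        ((∑ i ∈ Finset.Icc 1 n, a r i) / ((n : ℝ) * ((n : ℝ) + 2 * k + 1))))
      Filter.atTop (𝓝 (∑ r ∈ Finset.Icc k (2 * k), 2 * ((r : ℝ) + 1) * tinf r)) := by
    exact tendsto_finset_sum _ fun r hr => by
      have h := Finset.mem_Icc.mp hr
      exact (htinf r h.1 h.2).const_mul _
  -- but the sequence is eventually constantly 1
  have hone : ∀ᶠ n : ℕ in Filter.atTop,
      (∑ r ∈ Finset.Icc k (2 * k), 2 * ((r : ℝ) + 1) *
        ((∑ i ∈ Finset.Icc 1 n, a r i) / ((n : ℝ) * ((n : ℝ) + 2 * k + 1)))) = 1 := by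
    filter_upwards [Filter.eventually_ge_atTop 1] with n hn
    have hd : (n : ℝ) * ((n : ℝ) + 2 * k + 1) ≠ 0 := by positivity
    have : ∑ r ∈ Finset.Icc k (2 * k), 2 * ((r : ℝ) + 1) *
        ((∑ i ∈ Finset.Icc 1 n, a r i) / ((n : ℝ) * ((n : ℝ) + 2 * k + 1)))
        = (∑ r ∈ Finset.Icc k (2 * k), 2 * ((r : ℝ) + 1) *
          ∑ i ∈ Finset.Icc 1 n, a r i) / ((n : ℝ) * ((n : ℝ) + 2 * k + 1)) := by
      rw [Finset.sum_div]
      exact Finset.sum_congr rfl fun r _ => by ring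
    rw [this, part n, div_self hd]
  have h1 : Filter.Tendsto
      (fun n : ℕ => ∑ r ∈ Finset.Icc k (2 * k), 2 * ((r : ℝ) + 1) *
        ((∑ i ∈ Finset.Icc 1 n, a r i) / ((n : ℝ) * ((n : ℝ) + 2 * k + 1))))
      Filter.atTop (𝓝 1) :=
    Filter.Tendsto.congr' (hone.mono fun n h => h.symm) tendsto_const_nhds
  exact tendsto_nhds_unique hT h1
end

section
/- In the case k = r = 1, the sequence u_n^{(1)} satisfies u_2^{(1)} = −3/20 and the one-step recursion u_n^{(1)} = (−2(n + 1)/(n(n + 3)))·u_{n-1}^{(1)} for n ≥ 3, and consequently admits the closed form u_n^{(1)} = 3(n + 1)(−2)^{n−1}/(n + 3)! for all n ≥ 2. -/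
open Finset Filter Topology

/-- Rényi parking, discrete model, case `k = r = 1`: the sequence `u` satisfies
`u 2 = -3/20`, the one-step recursion `u n = (-2(n+1)/(n(n+3)))·u (n-1)` for
`n ≥ 3`, and the closed form `u n = 3(n+1)(-2)^{n-1}/(n+3)!` for `n ≥ 2`. -/
theorem parking_k1_u_closed_form
    (a s t u : ℕ → ℝ)
    (ha1 : a 1 = 1) (ha2 : a 2 = 0)
    (ha_rec : ∀ n : ℕ, 3 ≤ n →
      a n = 2 / ((n : ℝ) - 2) * ∑ i ∈ Finset.Icc 1 (n - 2), a i)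
    (hs : ∀ n : ℕ, s n = ∑ i ∈ Finset.Icc 1 n, a i)
    (ht : ∀ n : ℕ, t n = s n / ((n : ℝ) * ((n : ℝ) + 3)))
    (hu : ∀ n : ℕ, 2 ≤ n → u n = t n - t (n - 1)) :
    u 2 = -3 / 20 ∧
    (∀ n : ℕ, 3 ≤ n →
      u n = -2 * ((n : ℝ) + 1) / ((n : ℝ) * ((n : ℝ) + 3)) * u (n - 1)) ∧
    (∀ n : ℕ, 2 ≤ n →
      u n = 3 * ((n : ℝ) + 1) * (-2 : ℝ) ^ (n - 1) / ((n + 3).factorial : ℝ)) := by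
  have hs1 : s 1 = 1 := by rw [hs]; simpa using ha1
  have hs2 : s 2 = 1 := by
    rw [hs, show (2:ℕ) = 1 + 1 from rfl, Finset.sum_Icc_succ_top (by norm_num)]
    simp [ha1, ha2]
  have hu2 : u 2 = -3 / 20 := by
    rw [hu 2 le_rfl, show (2:ℕ) - 1 = 1 from rfl, ht 2, ht 1, hs1, hs2]
    norm_num
  have hrec : ∀ n : ℕ, 3 ≤ n →
      u n = -2 * ((n : ℝ) + 1) / ((n : ℝ) * ((n : ℝ) + 3)) * u (n - 1) := by
    intro n hn
    obtain ⟨m, rfl⟩ : ∃ m, n = m + 3 := ⟨n - 3, by omega⟩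
    have hcast : ((m + 3 : ℕ) : ℝ) - 2 = (m : ℝ) + 1 := by push_cast; ring
    have ha3 : a (m + 3) = 2 / ((m : ℝ) + 1) * s (m + 1) := by
      rw [ha_rec (m + 3) (by omega), hcast, show m + 3 - 2 = m + 1 from rfl, ← hs (m + 1)]
    have hsa : s (m + 3) = s (m + 2) + 2 / ((m : ℝ) + 1) * s (m + 1) := by
      rw [hs (m + 3), show m + 3 = (m + 2) + 1 from rfl,
        Finset.sum_Icc_succ_top (by omega), ← hs (m + 2), ha3]
    rw [hu (m + 3) (by omega), show m + 3 - 1 = m + 2 from rfl,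
      hu (m + 2) (by omega), show m + 2 - 1 = m + 1 from rfl,
      ht (m + 3), ht (m + 2), ht (m + 1), hsa]
    have h1 : (m : ℝ) + 1 ≠ 0 := by positivity
    have h2 : (m : ℝ) + 2 ≠ 0 := by positivity
    have h3 : (m : ℝ) + 3 ≠ 0 := by positivity
    have h4 : (m : ℝ) + 4 ≠ 0 := by positivity
    have h5 : (m : ℝ) + 5 ≠ 0 := by positivity
    have h6 : (m : ℝ) + 6 ≠ 0 := by positivity
    push_cast
    field_simp
    ring
  refine ⟨hu2, hrec, ?_⟩
  intro n hn
  induction n, hn using Nat.le_induction with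
  | base =>
    rw [hu2]
    norm_num [Nat.factorial]
  | succ n hn ih =>
    obtain ⟨p, rfl⟩ : ∃ p, n = p + 2 := ⟨n - 2, by omega⟩
    have h := hrec (p + 3) (by omega)
    rw [show p + 3 - 1 = p + 2 from rfl] at h
    rw [h, ih, show p + 2 - 1 = p + 1 from rfl, show p + 3 - 1 = p + 2 from rfl]
    have hfac : ((p + 3 + 3).factorial : ℝ) = ((p : ℝ) + 6) * ((p + 2 + 3).factorial : ℝ) := by
      rw [show p + 3 + 3 = (p + 2 + 3) + 1 from rfl, Nat.factorial_succ]
      push_cast; ring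
    rw [hfac]
    have hf : ((p + 2 + 3).factorial : ℝ) ≠ 0 :=
      Nat.cast_ne_zero.mpr (Nat.factorial_ne_zero _)
    have h3 : (p : ℝ) + 3 ≠ 0 := by positivity
    have h6 : (p : ℝ) + 6 ≠ 0 := by positivity
    push_cast
    field_simp
    ring
end

section
/- In the case k = 1, the limiting density of 1-gaps is D(1, 1) = 4·lim_{n→∞} t_n^{(1)} = 1 + 12·Σ_{n=2}^{∞} (n + 1)(−2)^{n−1}/(n + 3)! = 1 − 3e^{−2}. -/
/-!
Writing `s n = n (n + 3) t n`, the defining recurrence becomes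
`s (m + 3) = s (m + 2) + 2 / (m + 1) * s (m + 1)` with `s 1 = s 2 = 1`. Its solution is
`t n = 1/4 - 3/8 (e (n + 3) + e (n + 4))`, where `e N = ∑_{k < N} (-2)^k / k!` is a partial sum
of the exponential series at `-2`: the quadratic `n (n + 3)` solves the recurrence on its own, and
the correction is checked by expressing every `e` through `e (m + 4)`. Hence `t n → 1/4 - 3/4 e^{-2}`.
The series of the statement is `-1/8` times the sum of the tails of the exponential series from
`4` and from `5`, and `e 4 + e 5 = 0` makes it equal to `-e^{-2}/4`.
-/

open Finset Filter Topology

open scoped Nat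

lemma Real.hasSum_pow_div_factorial (x : ℝ) : HasSum (fun n => x ^ n / n !) (Real.exp x) := by
  rw [Real.exp_eq_exp_ℝ]
  exact NormedSpace.expSeries_div_hasSum_exp x

noncomputable def expPartialSum (x : ℝ) (N : ℕ) : ℝ := ∑ k ∈ range N, x ^ k / k !

namespace expPartialSum

lemma succ (x : ℝ) (N : ℕ) : expPartialSum x (N + 1) = expPartialSum x N + x ^ N / N ! :=
  sum_range_succ _ _

lemma tendsto_exp (x : ℝ) : Tendsto (expPartialSum x) atTop (𝓝 (Real.exp x)) :=
  (Real.hasSum_pow_div_factorial x).tendsto_sum_nat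

lemma hasSum_tail (x : ℝ) (k : ℕ) :
    HasSum (fun n => x ^ (n + k) / (n + k)!) (Real.exp x - expPartialSum x k) :=
  (hasSum_nat_add_iff' k).2 (Real.hasSum_pow_div_factorial x)

lemma four_add_five : expPartialSum (-2) 4 + expPartialSum (-2) 5 = 0 := by
  simp only [expPartialSum, sum_range_succ, sum_range_zero, Nat.factorial]
  norm_num

end expPartialSum

def SatisfiesParkingRecurrence (s : ℕ → ℝ) : Prop :=
  ∀ m : ℕ, s (m + 3) = s (m + 2) + 2 / ((m : ℝ) + 1) * s (m + 1)

lemma SatisfiesParkingRecurrence.eq_of_eq_one_two {s s' : ℕ → ℝ}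
    (hs : SatisfiesParkingRecurrence s) (hs' : SatisfiesParkingRecurrence s')
    (h1 : s 1 = s' 1) (h2 : s 2 = s' 2) {n : ℕ} (hn : 1 ≤ n) : s n = s' n := by
  obtain ⟨m, rfl⟩ := Nat.exists_eq_add_of_le' hn
  induction m using Nat.strong_induction_on with
  | _ m ih =>
    match m, ih with
    | 0, _ => exact h1
    | 1, _ => exact h2
    | m + 2, ih =>
      rw [hs, hs', ih (m + 1) (by omega) (by omega), ih m (by omega) (by omega)]

lemma satisfiesParkingRecurrence_of_partialSums (a s : ℕ → ℝ)
    (ha_rec : ∀ n : ℕ, 3 ≤ n → a n = 2 / ((n : ℝ) - 2) * ∑ i ∈ Icc 1 (n - 2), a i)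
    (hs : ∀ n : ℕ, s n = ∑ i ∈ Icc 1 n, a i) : SatisfiesParkingRecurrence s := by
  intro m
  have ha : a (m + 3) = 2 / ((m : ℝ) + 1) * s (m + 1) := by
    rw [ha_rec (m + 3) (by omega), hs]
    push_cast
    ring_nf
  rw [hs, hs, sum_Icc_succ_top (by omega), ← hs, ha]

noncomputable def parkingDensity (n : ℕ) : ℝ :=
  1 / 4 - 3 / 8 * (expPartialSum (-2) (n + 3) + expPartialSum (-2) (n + 4))

lemma parkingDensity_one : parkingDensity 1 = 1 / 4 := by
  rw [parkingDensity, expPartialSum.four_add_five]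
  ring

lemma parkingDensity_two : parkingDensity 2 = 1 / 10 := by
  simp only [parkingDensity, expPartialSum, sum_range_succ, sum_range_zero, Nat.factorial]
  norm_num

lemma satisfiesParkingRecurrence_parkingDensity :
    SatisfiesParkingRecurrence fun n => n * (n + 3) * parkingDensity n := by
  intro m
  have hf5 : ((m + 5)! : ℝ) = (m + 5) * (m + 4)! := by push_cast [Nat.factorial_succ]; ring
  have hf6 : ((m + 6)! : ℝ) = (m + 6) * (m + 5) * (m + 4)! := by
    push_cast [Nat.factorial_succ]; ring
  simp only [parkingDensity, show m + 3 + 4 = m + 6 + 1 from rfl,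
    show m + 3 + 3 = m + 5 + 1 from rfl, show m + 2 + 3 = m + 4 + 1 from rfl,
    show m + 1 + 3 = m + 4 from rfl, expPartialSum.succ, pow_succ, hf5, hf6]
  push_cast
  field_simp
  ring

lemma tendsto_parkingDensity :
    Tendsto parkingDensity atTop (𝓝 (1 / 4 - 3 / 4 * Real.exp (-2))) := by
  have h k := (expPartialSum.tendsto_exp (-2)).comp (tendsto_add_atTop_nat k)
  rw [show (3 / 4 : ℝ) * Real.exp (-2) = 3 / 8 * (Real.exp (-2) + Real.exp (-2)) by ring]
  exact ((h 3).add (h 4)).const_mul (3 / 8) |>.const_sub (1 / 4)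

lemma hasSum_parking_series :
    HasSum (fun n : ℕ => ((n : ℝ) + 3) * (-2 : ℝ) ^ (n + 1) / (n + 5)!) (-Real.exp (-2) / 4) := by
  have h := ((expPartialSum.hasSum_tail (-2) 4).add
    (expPartialSum.hasSum_tail (-2) 5)).div_const (-8)
  rw [show (Real.exp (-2) - expPartialSum (-2) 4 + (Real.exp (-2) - expPartialSum (-2) 5)) / -8 =
    -Real.exp (-2) / 4 by linear_combination expPartialSum.four_add_five / 8] at h
  refine h.congr_fun fun n => ?_
  have hf5 : ((n + 5)! : ℝ) = (n + 5) * (n + 4)! := by push_cast [Nat.factorial_succ]; ring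
  rw [hf5, show n + 4 = n + 1 + 3 from rfl, show n + 5 = n + 1 + 4 from rfl, pow_add, pow_add]
  field_simp
  ring

/-- Rényi parking, discrete model, case `k = r = 1`: the limiting density of
`1`-gaps is `D(1,1) = 4·lim t n = 1 + 12·Σ_{n=2}^{∞} (n+1)(-2)^{n-1}/(n+3)!
= 1 - 3e^{-2}`. -/
theorem parking_k1_density_one_gaps
    (a s t : ℕ → ℝ)
    (ha1 : a 1 = 1) (ha2 : a 2 = 0)
    (ha_rec : ∀ n : ℕ, 3 ≤ n →
      a n = 2 / ((n : ℝ) - 2) * ∑ i ∈ Finset.Icc 1 (n - 2), a i)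
    (hs : ∀ n : ℕ, s n = ∑ i ∈ Finset.Icc 1 n, a i)
    (ht : ∀ n : ℕ, t n = s n / ((n : ℝ) * ((n : ℝ) + 3)))
    (L : ℝ) (hL : Filter.Tendsto t Filter.atTop (𝓝 L)) :
    4 * L = 1 + 12 * ∑' n : ℕ,
        ((n : ℝ) + 3) * (-2 : ℝ) ^ (n + 1) / ((n + 5).factorial : ℝ) ∧
    4 * L = 1 - 3 * Real.exp (-2) := by
  have hs_closed : ∀ n, 1 ≤ n → s n = n * (n + 3) * parkingDensity n := fun n hn =>
    (satisfiesParkingRecurrence_of_partialSums a s ha_rec hs).eq_of_eq_one_two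
      satisfiesParkingRecurrence_parkingDensity
      (by rw [hs, Icc_self, sum_singleton, ha1, parkingDensity_one]; norm_num)
      (by rw [hs, sum_Icc_succ_top (by norm_num), Icc_self, sum_singleton, ha1, ha2,
            parkingDensity_two]; norm_num)
      hn
  have ht_closed : t =ᶠ[atTop] parkingDensity := by
    filter_upwards [eventually_ge_atTop 1] with n hn
    rw [ht, hs_closed n hn]
    have : (n : ℝ) ≠ 0 := by positivity
    field_simp
  have hL : L = 1 / 4 - 3 / 4 * Real.exp (-2) :=
    tendsto_nhds_unique hL (tendsto_parkingDensity.congr' ht_closed.symm)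
  rw [hasSum_parking_series.tsum_eq, hL]
  constructor <;> ring
end

section
/- In the case k = 1, the limiting density of 2-gaps is D(1, 2) = 6·lim_{n→∞} t_n^{(2)} = 3e^{−2}, and consequently the limiting filling density for k = 1 is D(1) = D(1, 1) + (2/3)·D(1, 2) = 1 − e^{−2}. -/
open Finset Filter Topology

/-!
The partial sums `s n = ∑_{i ≤ n} a i` obey the second-order linear recurrence
`(n - 2) (s n - s (n - 1)) = 2 s (n - 2)`, so they are determined by `s 1` and `s 2`.
Two explicit solutions are `n (n + 3)` and `n (n + 3) T n`, where
`T n = ∑_{m ≤ n} (-2)^m (m + 1) / (m + 3)!`. Matching initial values gives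
`s⁽²⁾ n = n (n + 3) T n` and `s⁽¹⁾ n = n (n + 3) (1/4 - 3/2 T n)`, and since
`(m + 1) / (m + 3)! = 1 / (m + 2)! - 2 / (m + 3)!`, the series for `T` sums to `e⁻² / 2`.
-/

noncomputable def parkingTerm (m : ℕ) : ℝ :=
  (-2 : ℝ) ^ m * (m + 1) / (m + 3).factorial

/-- Closed form of `t_n^{(2)}`. -/
noncomputable def parkingT (n : ℕ) : ℝ :=
  ∑ m ∈ range (n + 1), parkingTerm m

lemma parkingTerm_eq (m : ℕ) :
    parkingTerm m = 1 / 4 * ((-2 : ℝ) ^ (m + 2) / (m + 2).factorial)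
      + 1 / 4 * ((-2 : ℝ) ^ (m + 3) / (m + 3).factorial) := by
  have hfact : ((m + 3).factorial : ℝ) = ((m : ℝ) + 3) * (m + 2).factorial := by
    rw [Nat.factorial_succ]
    push_cast
    ring
  have hne : ((m + 2).factorial : ℝ) ≠ 0 := by positivity
  rw [parkingTerm, hfact, pow_add, pow_add]
  field_simp
  ring

lemma hasSum_parkingTerm : HasSum parkingTerm (Real.exp (-2) / 2) := by
  have hexp : HasSum (fun j : ℕ => (-2 : ℝ) ^ j / j.factorial) (Real.exp (-2)) := by
    rw [Real.exp_eq_exp_ℝ]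
    exact NormedSpace.expSeries_div_hasSum_exp (-2 : ℝ)
  have htail2 := (hasSum_nat_add_iff' 2).mpr hexp
  have htail3 := (hasSum_nat_add_iff' 3).mpr hexp
  have hvalue : Real.exp (-2) / 2
      = 1 / 4 * (Real.exp (-2) - ∑ i ∈ range 2, (-2 : ℝ) ^ i / i.factorial)
        + 1 / 4 * (Real.exp (-2) - ∑ i ∈ range 3, (-2 : ℝ) ^ i / i.factorial) := by
    norm_num [sum_range_succ, Nat.factorial]
    ring
  rw [funext parkingTerm_eq, hvalue]
  exact (htail2.mul_left _).add (htail3.mul_left _)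

lemma tendsto_parkingT : Tendsto parkingT atTop (𝓝 (Real.exp (-2) / 2)) :=
  hasSum_parkingTerm.tendsto_sum_nat.comp (tendsto_add_atTop_nat 1)

lemma parkingT_succ (n : ℕ) :
    parkingT (n + 1) = parkingT n + (-2 : ℝ) ^ (n + 1) * ((n : ℝ) + 2) / (n + 4).factorial := by
  rw [parkingT, sum_range_succ, ← parkingT, parkingTerm]
  push_cast
  ring

lemma parkingT_one : parkingT 1 = 0 := by
  norm_num [parkingT, parkingTerm, sum_range_succ, Nat.factorial]

lemma parkingT_two : parkingT 2 = 1 / 10 := by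
  norm_num [parkingT, parkingTerm, sum_range_succ, Nat.factorial]

lemma parkingT_recurrence (m : ℕ) :
    ((m : ℝ) + 3) * ((m : ℝ) + 6) * parkingT (m + 3)
      = ((m : ℝ) + 2) * ((m : ℝ) + 5) * parkingT (m + 2)
        + 2 * ((m : ℝ) + 4) * parkingT (m + 1) := by
  have hfact : ((m + 6).factorial : ℝ) = ((m : ℝ) + 6) * (m + 5).factorial := by
    rw [Nat.factorial_succ]
    push_cast
    ring
  have hne : ((m + 5).factorial : ℝ) ≠ 0 := by positivity
  rw [parkingT_succ (m + 2), parkingT_succ (m + 1), hfact]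
  push_cast
  rw [pow_succ _ (m + 2)]
  field_simp
  ring

/-- `(n - 2) (s n - s (n - 1)) = 2 s (n - 2)` at `n = m + 3`, free of natural subtraction. -/
def IsParkingRecurrence (s : ℕ → ℝ) : Prop :=
  ∀ m : ℕ, ((m : ℝ) + 1) * (s (m + 3) - s (m + 2)) = 2 * s (m + 1)

lemma IsParkingRecurrence.eq_succ_of_eq_one_of_eq_two {s u : ℕ → ℝ}
    (hs : IsParkingRecurrence s) (hu : IsParkingRecurrence u) (h1 : s 1 = u 1)
    (h2 : s 2 = u 2) (n : ℕ) :
    s (n + 1) = u (n + 1) := by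
  suffices ∀ n : ℕ, s (n + 1) = u (n + 1) ∧ s (n + 2) = u (n + 2) from (this n).1
  intro n
  induction n with
  | zero => exact ⟨h1, h2⟩
  | succ m ih =>
    refine ⟨ih.2, ?_⟩
    have hm : (m : ℝ) + 1 ≠ 0 := by positivity
    have hdiff : ((m : ℝ) + 1) * (s (m + 3) - u (m + 3)) = 0 := by
      linear_combination hs m - hu m + ((m : ℝ) + 1) * ih.2 + 2 * ih.1
    simpa [sub_eq_zero, hm] using hdiff

lemma isParkingRecurrence_partialSums {a : ℕ → ℝ}
    (ha : ∀ n : ℕ, 3 ≤ n → a n = 2 / ((n : ℝ) - 2) * ∑ i ∈ Icc 1 (n - 2), a i) :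
    IsParkingRecurrence (fun n => ∑ i ∈ Icc 1 n, a i) := by
  intro m
  have hm : (m : ℝ) + 1 ≠ 0 := by positivity
  have hstep : a (m + 3) = 2 / ((m : ℝ) + 1) * ∑ i ∈ Icc 1 (m + 1), a i := by
    rw [ha (m + 3) (by omega), show m + 3 - 2 = m + 1 from rfl]
    push_cast
    ring_nf
  dsimp only
  rw [sum_Icc_succ_top (by omega : 1 ≤ m + 3), add_sub_cancel_left, hstep]
  field_simp

lemma isParkingRecurrence_parkingT (c d : ℝ) :
    IsParkingRecurrence (fun n => (n : ℝ) * ((n : ℝ) + 3) * (c + d * parkingT n)) := by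
  intro m
  push_cast
  linear_combination ((m : ℝ) + 1) * d * parkingT_recurrence m

/-- `4 c` and `10 c + d` are the values at `1` and `2` of the solution `n (n + 3) (c + d T n)`. -/
lemma IsParkingRecurrence.limit_eq {s : ℕ → ℝ} {l c d : ℝ} (hs : IsParkingRecurrence s)
    (h1 : s 1 = 4 * c) (h2 : s 2 = 10 * c + d)
    (hl : Tendsto (fun n : ℕ => s n / ((n : ℝ) * ((n : ℝ) + 3))) atTop (𝓝 l)) :
    l = c + d * (Real.exp (-2) / 2) := by
  have hsol := hs.eq_succ_of_eq_one_of_eq_two (isParkingRecurrence_parkingT c d)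
    (by norm_num [h1, parkingT_one]) (by norm_num [h2, parkingT_two]; ring)
  refine tendsto_nhds_unique hl ((tendsto_parkingT.const_mul d).const_add c |>.congr' ?_)
  filter_upwards [eventually_ge_atTop 1] with n hn
  obtain ⟨k, rfl⟩ := Nat.exists_eq_add_of_le' hn
  rw [hsol k]
  field_simp

/-- Rényi parking, discrete model, case `k = 1`: the limiting density of
`2`-gaps is `D(1,2) = 6·lim t_n^{(2)} = 3e^{-2}`, and the limiting filling
density is `D(1) = D(1,1) + (2/3)·D(1,2) = 1 - e^{-2}`. -/
theorem parking_k1_filling_density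
    (a : ℕ → ℕ → ℝ) (L : ℕ → ℝ)
    (ha_init : ∀ r : ℕ, 1 ≤ r → r ≤ 2 → ∀ n : ℕ, 1 ≤ n → n ≤ 2 →
      a r n = if n = r then 1 else 0)
    (ha_rec : ∀ r : ℕ, 1 ≤ r → r ≤ 2 → ∀ n : ℕ, 3 ≤ n →
      a r n = 2 / ((n : ℝ) - 2) * ∑ i ∈ Finset.Icc 1 (n - 2), a r i)
    (hL : ∀ r : ℕ, 1 ≤ r → r ≤ 2 →
      Filter.Tendsto
        (fun n : ℕ => (∑ i ∈ Finset.Icc 1 n, a r i) / ((n : ℝ) * ((n : ℝ) + 3)))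
        Filter.atTop (𝓝 (L r))) :
    6 * L 2 = 3 * Real.exp (-2) ∧
    4 * L 1 + 2 / 3 * (6 * L 2) = 1 - Real.exp (-2) := by
  have hL1 : L 1 = 1 / 4 + -3 / 2 * (Real.exp (-2) / 2) :=
    (isParkingRecurrence_partialSums (ha_rec 1 le_rfl one_le_two)).limit_eq
      (by simp [ha_init])
      (by norm_num [sum_Icc_succ_top, ha_init])
      (hL 1 le_rfl one_le_two)
  have hL2 : L 2 = 0 + 1 * (Real.exp (-2) / 2) :=
    (isParkingRecurrence_partialSums (ha_rec 2 one_le_two le_rfl)).limit_eq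
      (by simp [ha_init])
      (by norm_num [sum_Icc_succ_top, ha_init])
      (hL 2 one_le_two le_rfl)
  constructor <;> linarith
end
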